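/- arXiv:math/0110027 — 7 statements merged into one kernel-verified Lean document; each statement's English description precedes it below -/
import Mathlib

section
/- Let (Y, V) be a covariant pair on a closed subspace H of ℋ and let U be a minimal unitary dilation of V. Then for all s, t ∈ S, all h, k ∈ H and all n ∈ N: if U_s* h = U_t* k, then U_s* Y_{ψ_s(n)M} h = U_t* Y_{ψ_t(n)M} k. -/
/-- Existence of a finite transversal for the cosets `mM` with `ψ_s⁻¹(m)M = nM`. -/
lemma exists_transversal' {N G : Type*} [Group N] [Group G]
    (ψ : G →* MulAut N) (M : Subgroup N) [M.Normal] (s : G)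
    (hfin : (Subgroup.comap (ψ s).toMonoidHom M).relIndex M ≠ 0) (n : N) :
    ∃ F : Finset N,
      (∀ m ∈ F, (QuotientGroup.mk (ψ s⁻¹ m) : N ⧸ M) = QuotientGroup.mk n) ∧
      (∀ m : N, (QuotientGroup.mk (ψ s⁻¹ m) : N ⧸ M) = QuotientGroup.mk n →
        ∃! f, f ∈ F ∧ (QuotientGroup.mk f : N ⧸ M) = QuotientGroup.mk m) := by
  classical
  set K : Subgroup N := Subgroup.comap (ψ s).toMonoidHom M with hK
  haveI : (K.subgroupOf M).FiniteIndex := ⟨hfin⟩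
  haveI : Fintype (M ⧸ K.subgroupOf M) := Fintype.ofFinite _
  have hinv : ∀ x : N, ψ s⁻¹ (ψ s x) = x := fun x => by
    rw [map_inv]; exact (ψ s).symm_apply_apply x
  have hinv' : ∀ x : N, ψ s (ψ s⁻¹ x) = x := fun x => by
    rw [map_inv]; exact (ψ s).apply_symm_apply x
  refine ⟨Finset.image (fun q : M ⧸ K.subgroupOf M => ψ s n * ψ s (q.out : N)) Finset.univ,
    ?_, ?_⟩
  · intro m hm
    simp only [Finset.mem_image] at hm
    obtain ⟨q, -, rfl⟩ := hm
    rw [map_mul, hinv, hinv, QuotientGroup.eq]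
    simpa using M.inv_mem (q.out : N).2
  · intro m hm
    rw [QuotientGroup.eq] at hm
    have hx : (n⁻¹ * ψ s⁻¹ m : N) ∈ M := by
      have := M.inv_mem hm; simpa [mul_inv_rev] using this
    set q : M ⧸ K.subgroupOf M := QuotientGroup.mk ⟨n⁻¹ * ψ s⁻¹ m, hx⟩ with hq
    have heqgen : ∀ a : M, (ψ s n * ψ s (a : N))⁻¹ * m
        = ψ s ((a : N)⁻¹ * (n⁻¹ * ψ s⁻¹ m)) := by
      intro a
      rw [map_mul, map_mul, map_inv, map_inv, hinv', mul_inv_rev, mul_assoc]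
    have hmemiff : ∀ q' : M ⧸ K.subgroupOf M,
        ((ψ s n * ψ s (q'.out : N))⁻¹ * m ∈ M) ↔ q' = q := by
      intro q'
      constructor
      · intro hmem
        rw [heqgen] at hmem
        have : q'.out⁻¹ * (⟨n⁻¹ * ψ s⁻¹ m, hx⟩ : M) ∈ K.subgroupOf M := hmem
        rw [← QuotientGroup.eq] at this
        rw [hq, ← this, QuotientGroup.out_eq']
      · rintro rfl
        rw [heqgen]
        have : q.out⁻¹ * (⟨n⁻¹ * ψ s⁻¹ m, hx⟩ : M) ∈ K.subgroupOf M := by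
          rw [← QuotientGroup.eq, QuotientGroup.out_eq']
        exact this
    refine ⟨ψ s n * ψ s (q.out : N), ⟨Finset.mem_image_of_mem _ (Finset.mem_univ q), ?_⟩, ?_⟩
    · rw [QuotientGroup.eq]
      exact (hmemiff q).mpr rfl
    · rintro f ⟨hf, hfm⟩
      simp only [Finset.mem_image] at hf
      obtain ⟨q', -, rfl⟩ := hf
      rw [QuotientGroup.eq] at hfm
      rw [(hmemiff q').mp hfm]

/-- Given the Hecke-pair setup `(N, G, S, ψ, M)`, a covariant pair `(Y, V)`
on a closed subspace `H` of `ℋ`, and a minimal unitary dilation `U` of `V`: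
if `U_s^* h = U_t^* k` then `U_s^* Y_{ψ_s(n)M} h = U_t^* Y_{ψ_t(n)M} k`. -/
theorem dilation_welldefined
    {ℋ : Type*} [NormedAddCommGroup ℋ] [InnerProductSpace ℂ ℋ] [CompleteSpace ℋ]
    {N G : Type*} [Group N] [Group G]
    (S : Subsemigroup G)
    (hG : ∀ g : G, ∃ s ∈ S, ∃ t ∈ S, g = s⁻¹ * t)
    (hrev : ∀ s t : S, ∃ u v : S, u * s = v * t)
    (ψ : G →* MulAut N)
    (M : Subgroup N) [M.Normal]
    (hMsub : ∀ s : S, M ≤ Subgroup.map (ψ (s : G)).toMonoidHom M)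
    (hMfin : ∀ s : S, (Subgroup.comap (ψ (s : G)).toMonoidHom M).relIndex M ≠ 0)
    (Hsub : Submodule ℂ ℋ) (hHc : IsClosed (Hsub : Set ℋ))
    (U : G →* (ℋ ≃ₗᵢ[ℂ] ℋ)) :
    haveI : CompleteSpace Hsub := hHc.completeSpace_coe
    ∀ (V : S → (Hsub →L[ℂ] Hsub)) (Y : N ⧸ M →* (Hsub ≃ₗᵢ[ℂ] Hsub)),
      -- `V` is an isometric representation of `S` on `H`
      (∀ (s : S) (ξ : Hsub), ‖V s ξ‖ = ‖ξ‖) →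
      (∀ s t : S, V (s * t) = (V s).comp (V t)) →
      -- `(Y, V)` is covariant:  `V_s Y_{nM} V_s^* = [M : ψ_s⁻¹(M)]⁻¹ ∑ Y_{mM}`,
      -- the sum being over the cosets `mM` with `ψ_s⁻¹(m)M = nM`, enumerated by any
      -- transversal `F`
      (∀ (s : S) (n : N) (F : Finset N),
        (∀ m ∈ F, (QuotientGroup.mk (ψ ((s : G)⁻¹) m) : N ⧸ M) = QuotientGroup.mk n) →
        (∀ m : N, (QuotientGroup.mk (ψ ((s : G)⁻¹) m) : N ⧸ M) = QuotientGroup.mk n →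
          ∃! f, f ∈ F ∧ (QuotientGroup.mk f : N ⧸ M) = QuotientGroup.mk m) →
        ∀ ξ : Hsub,
          V s (Y (QuotientGroup.mk n) (ContinuousLinearMap.adjoint (V s) ξ))
            = (((Subgroup.comap (ψ (s : G)).toMonoidHom M).relIndex M : ℂ))⁻¹ •
                ∑ m ∈ F, Y (QuotientGroup.mk m) ξ) →
      -- `U` is a minimal unitary dilation of `V`
      (∀ (s : S) (h : Hsub), U (s : G) ↑h = ↑(V s h)) →
      Dense (⋃ s : S, (U (s : G)).symm '' (Hsub : Set ℋ)) →
      -- conclusion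
      ∀ (s t : S) (h k : Hsub) (n : N),
        (U (s : G)).symm ↑h = (U (t : G)).symm ↑k →
        (U (s : G)).symm ↑(Y (QuotientGroup.mk (ψ (s : G) n)) h)
          = (U (t : G)).symm ↑(Y (QuotientGroup.mk (ψ (t : G) n)) k) := by
  haveI : CompleteSpace Hsub := hHc.completeSpace_coe
  intro V Y hiso hmul hcov hdil hdense s t h k n heq
  classical
  -- `V_u^* V_u = 1`
  have hadj : ∀ (u : S) (η : Hsub), ContinuousLinearMap.adjoint (V u) (V u η) = η := by
    intro u η
    have hip : ∀ ξ μ : Hsub, (inner ℂ (V u ξ) (V u μ) : ℂ) = inner ℂ ξ μ := fun ξ μ =>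
      LinearIsometry.inner_map_map ⟨(V u : Hsub →ₗ[ℂ] Hsub), hiso u⟩ ξ μ
    refine ext_inner_right ℂ (fun μ => ?_)
    rw [ContinuousLinearMap.adjoint_inner_left]
    exact hip η μ
  -- the intertwining relation `V_u Y_{nM} = Y_{ψ_u(n)M} V_u`
  have inter : ∀ (u : S) (n : N) (η : Hsub),
      V u (Y (QuotientGroup.mk n) η) = Y (QuotientGroup.mk (ψ (u : G) n)) (V u η) := by
    intro u n η
    obtain ⟨F, hF1, hF2⟩ := exists_transversal' ψ M (u : G) (hMfin u) 1
    have hinj : Function.Injective (fun f : N => ψ (u : G) n * f) := fun a b hab => by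
      simpa using hab
    set F' := F.image (fun f => ψ (u : G) n * f) with hF'
    have hF'1 : ∀ m ∈ F',
        (QuotientGroup.mk (ψ ((u : G)⁻¹) m) : N ⧸ M) = QuotientGroup.mk n := by
      intro m hm
      simp only [hF', Finset.mem_image] at hm
      obtain ⟨f, hf, rfl⟩ := hm
      have h1 := hF1 f hf
      have h2 : ψ ((u : G)⁻¹) (ψ (u : G) n) = n := by
        rw [map_inv]; exact (ψ (u : G)).symm_apply_apply n
      rw [map_mul, h2, QuotientGroup.mk_mul, h1]
      simp
    have hF'2 : ∀ m : N,
        (QuotientGroup.mk (ψ ((u : G)⁻¹) m) : N ⧸ M) = QuotientGroup.mk n →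
        ∃! f, f ∈ F' ∧ (QuotientGroup.mk f : N ⧸ M) = QuotientGroup.mk m := by
      intro m hm
      have h2 : ψ ((u : G)⁻¹) (ψ (u : G) n⁻¹) = n⁻¹ := by
        rw [map_inv]; exact (ψ (u : G)).symm_apply_apply n⁻¹
      have hm0 : (QuotientGroup.mk (ψ ((u : G)⁻¹) (ψ (u : G) n⁻¹ * m)) : N ⧸ M)
          = QuotientGroup.mk 1 := by
        rw [map_mul, h2, QuotientGroup.mk_mul, hm, QuotientGroup.mk_inv]
        simp
      obtain ⟨f, ⟨hfF, hfm⟩, huniq⟩ := hF2 _ hm0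
      refine ⟨ψ (u : G) n * f, ⟨Finset.mem_image_of_mem _ hfF, ?_⟩, ?_⟩
      · rw [QuotientGroup.mk_mul, hfm]
        rw [map_inv, QuotientGroup.mk_mul, QuotientGroup.mk_inv]
        simp [mul_assoc]
      · rintro g ⟨hgF', hgm⟩
        simp only [hF', Finset.mem_image] at hgF'
        obtain ⟨f', hf'F, rfl⟩ := hgF'
        have : (QuotientGroup.mk f' : N ⧸ M) = QuotientGroup.mk (ψ (u : G) n⁻¹ * m) := by
          rw [QuotientGroup.mk_mul] at hgm ⊢
          rw [map_inv, QuotientGroup.mk_inv]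
          rw [← hgm]
          simp [mul_assoc]
        rw [huniq f' ⟨hf'F, this⟩]
    set c : ℂ := (((Subgroup.comap (ψ (u : G)).toMonoidHom M).relIndex M : ℂ))⁻¹ with hc
    have h1 := hcov u n F' hF'1 hF'2 (V u η)
    have h2 := hcov u 1 F hF1 hF2 (V u η)
    rw [hadj u η] at h1 h2
    have hY1 : Y (QuotientGroup.mk (1 : N)) η = η := by
      have : (QuotientGroup.mk (1 : N) : N ⧸ M) = 1 := QuotientGroup.mk_one _
      rw [this, map_one]
      rfl
    rw [hY1] at h2
    rw [h1, hF', Finset.sum_image (fun a _ b _ hab => hinj hab)]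
    have step : ∀ f ∈ F, Y (QuotientGroup.mk ((ψ (u : G)) n * f)) (V u η)
        = Y (QuotientGroup.mk (ψ (u : G) n)) (Y (QuotientGroup.mk f) (V u η)) := by
      intro f hf
      rw [QuotientGroup.mk_mul, map_mul Y]
      rfl
    rw [Finset.sum_congr rfl step, ← map_sum, ← map_smul, ← h2]
  -- main argument
  obtain ⟨u, v, huv⟩ := hrev s t
  have hw : (u : G) * (s : G) = (v : G) * (t : G) := by
    exact_mod_cast congrArg (Subtype.val) huv
  have keyU : ∀ (a b : S) (x : Hsub),
      (U ((a : G) * (b : G))).symm ↑(V a x) = (U (b : G)).symm (x : ℋ) := by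
    intro a b x
    have : U ((a : G) * (b : G)) = U (a : G) * U (b : G) := map_mul U _ _
    rw [this]
    have happ : (U (a : G) * U (b : G)).symm ↑(V a x)
        = (U (b : G)).symm ((U (a : G)).symm ↑(V a x)) := rfl
    rw [happ]
    congr 1
    rw [← hdil a x]
    exact (U (a : G)).symm_apply_apply _
  have hVuv : V u h = V v k := by
    have e1 : (U ((u : G) * (s : G))).symm ↑(V u h) = (U (s : G)).symm (h : ℋ) := keyU u s h
    have e2 : (U ((v : G) * (t : G))).symm ↑(V v k) = (U (t : G)).symm (k : ℋ) := keyU v t k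
    have : (U ((u : G) * (s : G))).symm ↑(V u h) = (U ((u : G) * (s : G))).symm ↑(V v k) := by
      rw [e1, heq, ← e2, hw]
    have hc : (↑(V u h) : ℋ) = ↑(V v k) := (U ((u : G) * (s : G))).symm.injective this
    exact Subtype.ext hc
  have hcomm : ∀ (a b : S) (m : N),
      ψ ((a : G) * (b : G)) m = ψ (a : G) (ψ (b : G) m) := by
    intro a b m
    rw [map_mul]
    rfl
  calc (U (s : G)).symm ↑(Y (QuotientGroup.mk (ψ (s : G) n)) h)
      = (U ((u : G) * (s : G))).symm ↑(V u (Y (QuotientGroup.mk (ψ (s : G) n)) h)) :=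
        (keyU u s _).symm
    _ = (U ((u : G) * (s : G))).symm
          ↑(Y (QuotientGroup.mk (ψ ((u : G) * (s : G)) n)) (V u h)) := by
        rw [inter u (ψ (s : G) n) h, hcomm u s n]
    _ = (U ((v : G) * (t : G))).symm
          ↑(Y (QuotientGroup.mk (ψ ((v : G) * (t : G)) n)) (V v k)) := by
        rw [hw, hVuv]
    _ = (U ((v : G) * (t : G))).symm ↑(V v (Y (QuotientGroup.mk (ψ (t : G) n)) k)) := by
        rw [inter v (ψ (t : G) n) k, hcomm v t n]
    _ = (U (t : G)).symm ↑(Y (QuotientGroup.mk (ψ (t : G) n)) k) := keyU v t _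
end

section
/- Let (Y, V) be a covariant pair on a closed subspace H of ℋ and let U be a minimal unitary dilation of V. Then there is a unique unitary representation W of N on ℋ such that W_n U_s* h = U_s* Y_{ψ_s(n)M} h for all h ∈ H, s ∈ S, n ∈ N. Moreover: (i) U_g W_n U_g* = W_{ψ_g(n)} for all g ∈ G, n ∈ N; (ii) H ⊆ ℋ^M := {ξ ∈ ℋ : W_m ξ = ξ for all m ∈ M}; (iii) W_n h = Y_{nM} h for all h ∈ H, n ∈ N; and (iv) the smallest closed subspace of ℋ containing ℋ^M and invariant under all W_n (n ∈ N) and all U_g (g ∈ G) is ℋ itself. -/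
open scoped InnerProductSpace

lemma aux_sum_norm_eq {E : Type*} [NormedAddCommGroup E] [InnerProductSpace ℂ E]
    {ι : Type*} (F : Finset ι) (x : ι → E) (r : ℝ)
    (hr : ∀ i ∈ F, ‖x i‖ = r)
    (h : ‖∑ i ∈ F, x i‖ = F.card * r) :
    ∀ i ∈ F, ∀ j ∈ F, x i = x j := by
  classical
  intro i hi j hj
  by_cases hij : i = j
  · rw [hij]
  have hri : ‖x i‖ = r := hr i hi
  have hrj : ‖x j‖ = r := hr j hj
  have hjF : j ∈ F.erase i := Finset.mem_erase.2 ⟨fun h' => hij h'.symm, hj⟩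
  have hdecomp : ∑ k ∈ F, x k = x i + (x j + ∑ k ∈ (F.erase i).erase j, x k) := by
    rw [Finset.add_sum_erase _ _ hjF, Finset.add_sum_erase _ _ hi]
  have hdecompn : ∑ k ∈ F, ‖x k‖ = ‖x i‖ + (‖x j‖ + ∑ k ∈ (F.erase i).erase j, ‖x k‖) := by
    rw [Finset.add_sum_erase _ (fun k => ‖x k‖) hjF, Finset.add_sum_erase _ (fun k => ‖x k‖) hi]
  have hsumnorm : ∑ k ∈ F, ‖x k‖ = F.card * r := by
    rw [Finset.sum_congr rfl hr, Finset.sum_const, nsmul_eq_mul]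
  have hrest : ∑ k ∈ (F.erase i).erase j, ‖x k‖ = F.card * r - (r + r) := by
    rw [hsumnorm, hri, hrj] at hdecompn; linarith
  have hle : ‖∑ k ∈ F, x k‖ ≤ ‖x i + x j‖ + ∑ k ∈ (F.erase i).erase j, ‖x k‖ := by
    rw [hdecomp, ← add_assoc]
    calc ‖(x i + x j) + ∑ k ∈ (F.erase i).erase j, x k‖
        ≤ ‖x i + x j‖ + ‖∑ k ∈ (F.erase i).erase j, x k‖ := norm_add_le _ _
      _ ≤ ‖x i + x j‖ + ∑ k ∈ (F.erase i).erase j, ‖x k‖ := by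
          gcongr; exact norm_sum_le _ _
  have h2r : ‖x i + x j‖ = 2 * r := by
    have h1 : ‖x i + x j‖ ≤ 2 * r := by
      calc ‖x i + x j‖ ≤ ‖x i‖ + ‖x j‖ := norm_add_le _ _
        _ = 2 * r := by rw [hri, hrj]; ring
    rw [h, hrest] at hle
    linarith
  have hpar := parallelogram_law_with_norm ℂ (x i) (x j)
  have hz : ‖x i - x j‖ * ‖x i - x j‖ = 0 := by
    rw [h2r, hri, hrj] at hpar; nlinarith
  have := mul_self_eq_zero.1 hz
  rwa [norm_sub_eq_zero_iff] at this

lemma aux_intertwine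
    {ℋ : Type*} [NormedAddCommGroup ℋ] [InnerProductSpace ℂ ℋ] [CompleteSpace ℋ]
    {N G : Type*} [Group N] [Group G]
    (S : Subsemigroup G)
    (ψ : G →* MulAut N)
    (M : Subgroup N) [M.Normal]
    (hMsub : ∀ s : S, M ≤ Subgroup.map (ψ (s : G)).toMonoidHom M)
    (hMfin : ∀ s : S, (Subgroup.comap (ψ (s : G)).toMonoidHom M).relIndex M ≠ 0)
    (Hsub : Submodule ℂ ℋ) [CompleteSpace Hsub]
    (V : S → (Hsub →L[ℂ] Hsub)) (Y : N ⧸ M →* (Hsub ≃ₗᵢ[ℂ] Hsub))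
    (hViso : ∀ (s : S) (ξ : Hsub), ‖V s ξ‖ = ‖ξ‖)
    (hcov : ∀ (s : S) (n : N) (F : Finset N),
        (∀ m ∈ F, (QuotientGroup.mk (ψ ((s : G)⁻¹) m) : N ⧸ M) = QuotientGroup.mk n) →
        (∀ m : N, (QuotientGroup.mk (ψ ((s : G)⁻¹) m) : N ⧸ M) = QuotientGroup.mk n →
          ∃! f, f ∈ F ∧ (QuotientGroup.mk f : N ⧸ M) = QuotientGroup.mk m) →
        ∀ ξ : Hsub,
          V s (Y (QuotientGroup.mk n) (ContinuousLinearMap.adjoint (V s) ξ))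
            = (((Subgroup.comap (ψ (s : G)).toMonoidHom M).relIndex M : ℂ))⁻¹ •
                ∑ m ∈ F, Y (QuotientGroup.mk m) ξ) :
    ∀ (s : S) (n : N) (ζ : Hsub),
      V s (Y (QuotientGroup.mk n) ζ)
        = Y (QuotientGroup.mk (ψ (s : G) n)) (V s ζ) := by
  intro s n ζ
  set K := Subgroup.comap (ψ (s : G)).toMonoidHom M with hK
  set c := K.relIndex M with hcdef
  have hc : c ≠ 0 := hMfin s
  -- inverse automorphism facts
  have hpsiinv : ∀ x : N, ψ ((s : G)⁻¹) (ψ (s : G) x) = x := by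
    intro x
    have : ψ ((s:G)⁻¹) * ψ (s:G) = 1 := by rw [← map_mul, inv_mul_cancel, map_one]
    calc ψ ((s:G)⁻¹) (ψ (s:G) x) = (ψ ((s:G)⁻¹) * ψ (s:G)) x := rfl
      _ = x := by rw [this]; rfl
  have hpsiinv' : ∀ x : N, ψ (s : G) (ψ ((s : G)⁻¹) x) = x := by
    intro x
    have : ψ (s:G) * ψ ((s:G)⁻¹) = 1 := by rw [← map_mul, mul_inv_cancel, map_one]
    calc ψ (s:G) (ψ ((s:G)⁻¹) x) = (ψ (s:G) * ψ ((s:G)⁻¹)) x := rfl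
      _ = x := by rw [this]; rfl
  -- the finite quotient
  haveI : (K.subgroupOf M).FiniteIndex := ⟨hc⟩
  haveI : Finite (M ⧸ K.subgroupOf M) := inferInstance
  haveI : Fintype (M ⧸ K.subgroupOf M) := Fintype.ofFinite _
  classical
  set F : Finset N :=
    Finset.image (fun q : M ⧸ K.subgroupOf M => ψ (s : G) (n * (q.out : N))) Finset.univ with hF
  have hmemK : ∀ x : N, x ∈ K ↔ ψ (s : G) x ∈ M := fun x => Iff.rfl
  -- property (a)
  have ha : ∀ m ∈ F, (QuotientGroup.mk (ψ ((s : G)⁻¹) m) : N ⧸ M) = QuotientGroup.mk n := by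
    intro m hm
    rw [hF, Finset.mem_image] at hm
    obtain ⟨q, -, rfl⟩ := hm
    rw [hpsiinv]
    exact QuotientGroup.mk_mul_of_mem n (q.out : M).2
  -- property (b)
  have hb : ∀ m : N, (QuotientGroup.mk (ψ ((s : G)⁻¹) m) : N ⧸ M) = QuotientGroup.mk n →
      ∃! f, f ∈ F ∧ (QuotientGroup.mk f : N ⧸ M) = QuotientGroup.mk m := by
    intro m hm
    have hx : n⁻¹ * ψ ((s:G)⁻¹) m ∈ M := (QuotientGroup.eq).1 hm.symm
    set q : M ⧸ K.subgroupOf M := QuotientGroup.mk ⟨_, hx⟩ with hq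
    have hmx : m = ψ (s:G) (n * (n⁻¹ * ψ ((s:G)⁻¹) m)) := by
      rw [mul_inv_cancel_left, hpsiinv']
    refine ⟨ψ (s:G) (n * (q.out : N)), ⟨?_, ?_⟩, ?_⟩
    · rw [hF, Finset.mem_image]; exact ⟨q, Finset.mem_univ _, rfl⟩
    · -- mk (ψ s (n * q.out)) = mk m
      rw [QuotientGroup.eq]
      have houtq : ((q.out : M) : N)⁻¹ * (n⁻¹ * ψ ((s:G)⁻¹) m) ∈ K := by
        have : (QuotientGroup.mk q.out : M ⧸ K.subgroupOf M) = QuotientGroup.mk ⟨_, hx⟩ := by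
          rw [QuotientGroup.out_eq']
        have h2 := (QuotientGroup.eq).1 this
        rwa [Subgroup.mem_subgroupOf] at h2
      have : (ψ (s:G) (n * (q.out : N)))⁻¹ * m
          = ψ (s:G) (((q.out : M) : N)⁻¹ * (n⁻¹ * ψ ((s:G)⁻¹) m)) := by
        conv_lhs => rw [hmx]
        rw [← map_inv, ← map_mul]
        congr 1
        group
      rw [this]
      exact (hmemK _).1 houtq
    · rintro f' ⟨hf'F, hf'mk⟩
      rw [hF, Finset.mem_image] at hf'F
      obtain ⟨q', -, rfl⟩ := hf'F
      -- show q' = q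
      have hq'q : q' = q := by
        have h1 : (QuotientGroup.mk (ψ (s:G) (n * (q'.out : N))) : N ⧸ M)
            = QuotientGroup.mk (ψ (s:G) (n * (n⁻¹ * ψ ((s:G)⁻¹) m))) := by
          rw [← hmx]; exact hf'mk
        have h2 : (ψ (s:G) (n * (q'.out : N)))⁻¹ * ψ (s:G) (n * (n⁻¹ * ψ ((s:G)⁻¹) m)) ∈ M :=
          (QuotientGroup.eq).1 h1
        have h3 : ((q'.out : M) : N)⁻¹ * (n⁻¹ * ψ ((s:G)⁻¹) m) ∈ K := by
          rw [hmemK]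
          have he : ψ (s:G) (((q'.out : M) : N)⁻¹ * (n⁻¹ * ψ ((s:G)⁻¹) m))
              = (ψ (s:G) (n * ((q'.out : M) : N)))⁻¹ * ψ (s:G) (n * (n⁻¹ * ψ ((s:G)⁻¹) m)) := by
            rw [← map_inv, ← map_mul]
            congr 1
            group
          rw [he]
          exact h2
        have h4 : (QuotientGroup.mk q'.out : M ⧸ K.subgroupOf M) = QuotientGroup.mk ⟨_, hx⟩ := by
          rw [QuotientGroup.eq, Subgroup.mem_subgroupOf]
          exact h3
        rw [QuotientGroup.out_eq'] at h4
        rw [h4, hq]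
      rw [hq'q]
  -- cardinality of F
  have hinj : Function.Injective
      (fun q : M ⧸ K.subgroupOf M => ψ (s : G) (n * ((q.out : M) : N))) := by
    intro q q' hqq'
    simp only at hqq'
    have h1 := (ψ (s:G)).injective hqq'
    have h2 : ((q.out : M) : N) = ((q'.out : M) : N) := mul_left_cancel h1
    have h3 : (q.out : M) = (q'.out : M) := Subtype.ext h2
    rw [← QuotientGroup.out_eq' q, ← QuotientGroup.out_eq' q', h3]
  have hFcard : F.card = c := by
    rw [hF, Finset.card_image_of_injective _ hinj, Finset.card_univ]
    exact (Nat.card_eq_fintype_card (α := M ⧸ K.subgroupOf M)).symm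
  -- the adjoint is a left inverse
  have hVadj : ContinuousLinearMap.adjoint (V s) (V s ζ) = ζ := by
    have hVinner : ∀ x y : Hsub, ⟪(V s) x, (V s) y⟫_ℂ = ⟪x, y⟫_ℂ := fun x y =>
      LinearIsometry.inner_map_map ⟨(V s : Hsub →ₗ[ℂ] Hsub), hViso s⟩ x y
    apply ext_inner_right ℂ
    intro v
    rw [ContinuousLinearMap.adjoint_inner_left]
    exact hVinner ζ v
  -- apply covariance
  have hc2 := hcov s n F ha hb (V s ζ)
  rw [hVadj, ← hK, ← hcdef] at hc2
  have hcC : ((c : ℂ)) ≠ 0 := Nat.cast_ne_zero.2 hc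
  have hSig : ∑ m ∈ F, Y (QuotientGroup.mk m) (V s ζ)
      = (c : ℂ) • V s (Y (QuotientGroup.mk n) ζ) := by
    rw [hc2, smul_smul, mul_inv_cancel₀ hcC, one_smul]
  have hterm : ∀ m ∈ F, ‖Y (QuotientGroup.mk m) (V s ζ)‖ = ‖ζ‖ := by
    intro m _
    rw [(Y _).norm_map, hViso s]
  have hnormSig : ‖∑ m ∈ F, Y (QuotientGroup.mk m) (V s ζ)‖ = F.card * ‖ζ‖ := by
    rw [hSig, norm_smul, Complex.norm_natCast, hViso s, (Y _).norm_map, hFcard]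
  have hall := aux_sum_norm_eq F (fun m => Y (QuotientGroup.mk m) (V s ζ)) ‖ζ‖ hterm hnormSig
  obtain ⟨f₀, ⟨hf₀F, hf₀mk⟩, -⟩ := hb (ψ (s:G) n) (by rw [hpsiinv])
  have hsum2 : ∑ m ∈ F, Y (QuotientGroup.mk m) (V s ζ)
      = F.card • Y (QuotientGroup.mk f₀) (V s ζ) :=
    Finset.sum_eq_card_nsmul (fun m hm => hall m hm f₀ hf₀F)
  have hfin : V s (Y (QuotientGroup.mk n) ζ) = Y (QuotientGroup.mk f₀) (V s ζ) := by
    rw [hc2, hsum2, hFcard, ← Nat.cast_smul_eq_nsmul ℂ, smul_smul, inv_mul_cancel₀ hcC, one_smul]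
  rw [hfin, hf₀mk]



/-- Given the Hecke-pair setup `(N, G, S, ψ, M)`, a covariant pair `(Y, V)`
on a closed subspace `H` of `ℋ` and a minimal unitary dilation `U` of `V`, there is a
unique unitary representation `W` of `N` on `ℋ` with `W_n U_s^* h = U_s^* Y_{ψ_s(n)M} h`;
moreover `U_g W_n U_g^* = W_{ψ_g(n)}`, `H ⊆ ℋ^M`, `W_n|_H = Y_{nM}`, and `W ⋊ U` is
generated by its `M`-fixed vectors. -/
theorem exists_unique_dilated_representation
    {ℋ : Type*} [NormedAddCommGroup ℋ] [InnerProductSpace ℂ ℋ] [CompleteSpace ℋ]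
    {N G : Type*} [Group N] [Group G]
    (S : Subsemigroup G)
    (hG : ∀ g : G, ∃ s ∈ S, ∃ t ∈ S, g = s⁻¹ * t)
    (hrev : ∀ s t : S, ∃ u v : S, u * s = v * t)
    (ψ : G →* MulAut N)
    (M : Subgroup N) [M.Normal]
    (hMsub : ∀ s : S, M ≤ Subgroup.map (ψ (s : G)).toMonoidHom M)
    (hMfin : ∀ s : S, (Subgroup.comap (ψ (s : G)).toMonoidHom M).relIndex M ≠ 0)
    (Hsub : Submodule ℂ ℋ) (hHc : IsClosed (Hsub : Set ℋ))
    (U : G →* (ℋ ≃ₗᵢ[ℂ] ℋ)) :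
    haveI : CompleteSpace Hsub := hHc.completeSpace_coe
    ∀ (V : S → (Hsub →L[ℂ] Hsub)) (Y : N ⧸ M →* (Hsub ≃ₗᵢ[ℂ] Hsub)),
      -- `V` is an isometric representation of `S` on `H`
      (∀ (s : S) (ξ : Hsub), ‖V s ξ‖ = ‖ξ‖) →
      (∀ s t : S, V (s * t) = (V s).comp (V t)) →
      -- `(Y, V)` is covariant
      (∀ (s : S) (n : N) (F : Finset N),
        (∀ m ∈ F, (QuotientGroup.mk (ψ ((s : G)⁻¹) m) : N ⧸ M) = QuotientGroup.mk n) →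
        (∀ m : N, (QuotientGroup.mk (ψ ((s : G)⁻¹) m) : N ⧸ M) = QuotientGroup.mk n →
          ∃! f, f ∈ F ∧ (QuotientGroup.mk f : N ⧸ M) = QuotientGroup.mk m) →
        ∀ ξ : Hsub,
          V s (Y (QuotientGroup.mk n) (ContinuousLinearMap.adjoint (V s) ξ))
            = (((Subgroup.comap (ψ (s : G)).toMonoidHom M).relIndex M : ℂ))⁻¹ •
                ∑ m ∈ F, Y (QuotientGroup.mk m) ξ) →
      -- `U` is a minimal unitary dilation of `V`
      (∀ (s : S) (h : Hsub), U (s : G) ↑h = ↑(V s h)) →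
      Dense (⋃ s : S, (U (s : G)).symm '' (Hsub : Set ℋ)) →
      -- conclusion: a unique unitary representation `W` of `N` on `ℋ`
      ∃ W : N →* (ℋ ≃ₗᵢ[ℂ] ℋ),
        (∀ (h : Hsub) (s : S) (n : N),
          W n ((U (s : G)).symm ↑h)
            = (U (s : G)).symm ↑(Y (QuotientGroup.mk (ψ (s : G) n)) h)) ∧
        -- (i) covariance of `(W, U)`
        (∀ (g : G) (n : N) (ξ : ℋ), U g (W n ((U g).symm ξ)) = W (ψ g n) ξ) ∧
        -- (ii) `H ⊆ ℋ^M`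
        (∀ (h : Hsub), ∀ m ∈ M, W m ↑h = ↑h) ∧
        -- (iii) `W_n|_H = Y_{nM}`
        (∀ (h : Hsub) (n : N), W n ↑h = ↑(Y (QuotientGroup.mk n) h)) ∧
        -- (iv) `ℋ` is generated by the `M`-fixed vectors of `W`
        (∀ E : Submodule ℂ ℋ, IsClosed (E : Set ℋ) →
          (∀ ξ : ℋ, (∀ m ∈ M, W m ξ = ξ) → ξ ∈ E) →
          (∀ (n : N), ∀ ξ ∈ E, W n ξ ∈ E) →
          (∀ (g : G), ∀ ξ ∈ E, U g ξ ∈ E) →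
          E = ⊤) ∧
        -- uniqueness of `W`
        (∀ W' : N →* (ℋ ≃ₗᵢ[ℂ] ℋ),
          (∀ (h : Hsub) (s : S) (n : N),
            W' n ((U (s : G)).symm ↑h)
              = (U (s : G)).symm ↑(Y (QuotientGroup.mk (ψ (s : G) n)) h)) →
          W' = W) := by
  haveI : CompleteSpace Hsub := hHc.completeSpace_coe
  intro V Y hViso hVmul hcov hdil hdense
  classical
  have hA := aux_intertwine S ψ M hMsub hMfin Hsub V Y hViso hcov
  -- basic facts about U
  have hUmul : ∀ (a b : G) (x : ℋ), U (a * b) x = U a (U b x) := by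
    intro a b x; rw [map_mul]; rfl
  have hUinv : ∀ (a : G) (x : ℋ), U a⁻¹ x = (U a).symm x := by
    intro a x; rw [map_inv]; rfl
  have hUsymm_mul : ∀ (a b : G) (x : ℋ), (U (a * b)).symm x = (U b).symm ((U a).symm x) := by
    intro a b x
    apply (U (a * b)).injective
    rw [LinearIsometryEquiv.apply_symm_apply, hUmul]
    simp
  have hSne : Nonempty S := by
    obtain ⟨s, hs, -⟩ := hG 1
    exact ⟨⟨s, hs⟩⟩
  -- the directed family of subspaces
  set Dmap : S → Submodule ℂ ℋ :=
    fun s => Submodule.map ((U (s : G)).symm.toLinearEquiv : ℋ →ₗ[ℂ] ℋ) Hsub with hDmap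
  have hmemDmap : ∀ (s : S) (x : ℋ), x ∈ Dmap s ↔ ∃ h : Hsub, (U (s : G)).symm ↑h = x := by
    intro s x
    rw [hDmap]
    constructor
    · rintro ⟨h, hh, rfl⟩; exact ⟨⟨h, hh⟩, rfl⟩
    · rintro ⟨h, rfl⟩; exact ⟨↑h, h.2, rfl⟩
  have hstep : ∀ u s : S, Dmap s ≤ Dmap (u * s) := by
    intro u s x hx
    obtain ⟨h, rfl⟩ := (hmemDmap s x).1 hx
    refine (hmemDmap (u * s) _).2 ⟨V u h, ?_⟩
    have hco : ((u * s : S) : G) = (u : G) * (s : G) := rfl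
    rw [hco, hUsymm_mul, ← hdil u h]
    simp
  have hdir : Directed (· ≤ ·) Dmap := by
    intro s t
    obtain ⟨u, v, huv⟩ := hrev s t
    exact ⟨u * s, hstep u s, by rw [huv]; exact hstep v t⟩
  set Dmod : Submodule ℂ ℋ := ⨆ s : S, Dmap s with hDmod
  have hmemD : ∀ x : ℋ, x ∈ Dmod ↔ ∃ s : S, x ∈ Dmap s := fun x =>
    Submodule.mem_iSup_of_directed Dmap hdir
  have hsubD : (⋃ s : S, (U (s : G)).symm '' (Hsub : Set ℋ)) ⊆ (Dmod : Set ℋ) := by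
    rintro ξ hξ
    obtain ⟨A, ⟨s, rfl⟩, h, hh, rfl⟩ := hξ
    exact (hmemD _).2 ⟨s, (hmemDmap s _).2 ⟨⟨h, hh⟩, rfl⟩⟩
  have hDdense' : Dense (Dmod : Set ℋ) := hdense.mono hsubD
  -- choice of representatives
  have hrep : ∀ x : Dmod, ∃ s : S, ∃ h : Hsub, (U (s : G)).symm ↑h = (x : ℋ) := by
    intro x
    obtain ⟨s, hx⟩ := (hmemD x).1 x.2
    obtain ⟨h, hh⟩ := (hmemDmap s _).1 hx
    exact ⟨s, h, hh⟩
  choose σ η hση using hrep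
  -- independence of representative
  have hind : ∀ (n : N) (s t : S) (h k : Hsub),
      (U (s : G)).symm ↑h = (U (t : G)).symm ↑k →
      (U (s : G)).symm ↑(Y (QuotientGroup.mk (ψ (s : G) n)) h)
        = (U (t : G)).symm ↑(Y (QuotientGroup.mk (ψ (t : G) n)) k) := by
    intro n s t h k heq
    obtain ⟨u, v, huv⟩ := hrev s t
    have hco1 : ((u * s : S) : G) = (u : G) * (s : G) := rfl
    have hco2 : ((v * t : S) : G) = (v : G) * (t : G) := rfl
    have hVuv : V u h = V v k := by
      apply Subtype.coe_injective
      show ((V u h : Hsub) : ℋ) = ((V v k : Hsub) : ℋ)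
      have h1 : U ((u : G) * (s : G)) ((U (s : G)).symm ↑h) = ↑(V u h) := by
        rw [hUmul, LinearIsometryEquiv.apply_symm_apply, hdil]
      have h2 : U ((v : G) * (t : G)) ((U (t : G)).symm ↑k) = ↑(V v k) := by
        rw [hUmul, LinearIsometryEquiv.apply_symm_apply, hdil]
      have h3 : ((u : G) * (s : G)) = ((v : G) * (t : G)) := by
        rw [← hco1, ← hco2, huv]
      rw [← h1, ← h2, h3, heq]
    have key : ∀ (w z : S) (x : Hsub),
        (U (z : G)).symm ↑(Y (QuotientGroup.mk (ψ (z : G) n)) x)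
          = (U ((w * z : S) : G)).symm
              ↑(Y (QuotientGroup.mk (ψ ((w * z : S) : G) n)) (V w x)) := by
      intro w z x
      have hpsi : ψ ((w * z : S) : G) n = ψ (w : G) (ψ (z : G) n) := by
        have : ((w * z : S) : G) = (w : G) * (z : G) := rfl
        rw [this, map_mul]; rfl
      rw [hpsi, ← hA w (ψ (z : G) n) x]
      have hco : ((w * z : S) : G) = (w : G) * (z : G) := rfl
      rw [hco, hUsymm_mul, ← hdil w]
      simp
    rw [key u s h, key v t k, huv, hVuv]
  -- the densely defined operator
  set w : N → Dmod → ℋ := fun n x =>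
    (U ((σ x : S) : G)).symm ↑(Y (QuotientGroup.mk (ψ ((σ x : S) : G) n)) (η x)) with hw
  have hwd : ∀ (n : N) (x : Dmod) (s : S) (h : Hsub),
      (U (s : G)).symm ↑h = (x : ℋ) →
      w n x = (U (s : G)).symm ↑(Y (QuotientGroup.mk (ψ (s : G) n)) h) := by
    intro n x s h hx
    exact hind n (σ x) s (η x) h (by rw [hση x, hx])
  have hcommon : ∀ x y : Dmod, ∃ (s : S) (hx hy : Hsub),
      (U (s : G)).symm ↑hx = (x : ℋ) ∧ (U (s : G)).symm ↑hy = (y : ℋ) := by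
    intro x y
    obtain ⟨s', h1, h2⟩ := hdir (σ x) (σ y)
    have hx' : (x : ℋ) ∈ Dmap s' := h1 ((hmemDmap (σ x) _).2 ⟨η x, hση x⟩)
    have hy' : (y : ℋ) ∈ Dmap s' := h2 ((hmemDmap (σ y) _).2 ⟨η y, hση y⟩)
    obtain ⟨hx, hhx⟩ := (hmemDmap s' _).1 hx'
    obtain ⟨hy, hhy⟩ := (hmemDmap s' _).1 hy'
    exact ⟨s', hx, hy, hhx, hhy⟩
  have hwadd : ∀ (n : N) (x y : Dmod), w n (x + y) = w n x + w n y := by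
    intro n x y
    obtain ⟨s, hx, hy, hhx, hhy⟩ := hcommon x y
    have hxy : (U (s : G)).symm ↑(hx + hy) = ((x + y : Dmod) : ℋ) := by
      push_cast
      rw [map_add, hhx, hhy]
    rw [hwd n (x + y) s (hx + hy) hxy, hwd n x s hx hhx, hwd n y s hy hhy]
    simp [map_add]
  have hwsmul : ∀ (n : N) (a : ℂ) (x : Dmod), w n (a • x) = a • w n x := by
    intro n a x
    have hx : (U ((σ x : S) : G)).symm ↑(a • η x) = ((a • x : Dmod) : ℋ) := by
      push_cast
      rw [map_smul, hση x]
    rw [hwd n (a • x) (σ x) (a • η x) hx, hw]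
    simp [map_smul]
  have hwnorm : ∀ (n : N) (x : Dmod), ‖w n x‖ = ‖(x : ℋ)‖ := by
    intro n x
    rw [hw, ← hση x]
    simp only [LinearIsometryEquiv.norm_map]
    exact (Y _).norm_map (η x)
  
  -- continuous linear maps on Dmod and extension to ℋ
  let Wlin : N → (Dmod →ₗ[ℂ] ℋ) := fun n =>
    { toFun := w n, map_add' := hwadd n, map_smul' := hwsmul n }
  let Wcont : N → (Dmod →L[ℂ] ℋ) := fun n =>
    LinearMap.mkContinuous (Wlin n) 1 (by
      intro x
      rw [one_mul]
      exact le_of_eq (hwnorm n x))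
  have hDR : DenseRange ((Dmod.subtypeL : Dmod →L[ℂ] ℋ) : Dmod → ℋ) := by
    have h1 : Set.range ((Dmod.subtypeL : Dmod →L[ℂ] ℋ) : Dmod → ℋ) = (Dmod : Set ℋ) :=
      Subtype.range_coe
    rw [DenseRange, h1]
    exact hDdense'
  have hUI : IsUniformInducing ((Dmod.subtypeL : Dmod →L[ℂ] ℋ) : Dmod → ℋ) :=
    isometry_subtype_coe.isUniformInducing
  let Wext : N → (ℋ →L[ℂ] ℋ) := fun n => (Wcont n).extend Dmod.subtypeL
  have hWext : ∀ (n : N) (x : Dmod), Wext n ↑x = w n x := fun n x =>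
    ContinuousLinearMap.extend_eq (Wcont n) hDR hUI x
  -- extension-by-density tools
  have hextH : ∀ (f g : ℋ → ℋ), Continuous f → Continuous g →
      (∀ x : Dmod, f ↑x = g ↑x) → ∀ ξ : ℋ, f ξ = g ξ := by
    intro f g hf hg hfg ξ
    have heq : Set.EqOn f g (Dmod : Set ℋ) := fun ζ hζ => hfg ⟨ζ, hζ⟩
    exact congrFun (Continuous.ext_on hDdense' hf hg heq) ξ
  have hextR : ∀ (f g : ℋ → ℝ), Continuous f → Continuous g →
      (∀ x : Dmod, f ↑x = g ↑x) → ∀ ξ : ℋ, f ξ = g ξ := by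
    intro f g hf hg hfg ξ
    have heq : Set.EqOn f g (Dmod : Set ℋ) := fun ζ hζ => hfg ⟨ζ, hζ⟩
    exact congrFun (Continuous.ext_on hDdense' hf hg heq) ξ
  have hWnorm : ∀ (n : N) (ξ : ℋ), ‖Wext n ξ‖ = ‖ξ‖ := by
    intro n
    refine hextR (fun ξ => ‖Wext n ξ‖) (fun ξ => ‖ξ‖)
      ((Wext n).continuous.norm) continuous_norm ?_
    intro x
    show ‖Wext n ↑x‖ = ‖(x : ℋ)‖
    rw [hWext n x, hwnorm n x]
  have hwmem : ∀ (n : N) (x : Dmod), w n x ∈ Dmod := by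
    intro n x
    refine (hmemD _).2 ⟨σ x, (hmemDmap _ _).2
      ⟨Y (QuotientGroup.mk (ψ ((σ x : S) : G) n)) (η x), ?_⟩⟩
    rw [hw]
  have hWmul : ∀ (n n' : N) (ξ : ℋ), Wext n (Wext n' ξ) = Wext (n * n') ξ := by
    intro n n'
    refine hextH _ _ ((Wext n).continuous.comp (Wext n').continuous)
      (Wext (n * n')).continuous ?_
    intro x
    rw [hWext n' x, hWext (n * n') x]
    have hx' : w n' x ∈ Dmod := hwmem n' x
    have e0 : Wext n (w n' x) = w n ⟨w n' x, hx'⟩ := hWext n ⟨_, hx'⟩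
    rw [e0]
    have e1 : (U ((σ x : S) : G)).symm ↑(Y (QuotientGroup.mk (ψ ((σ x : S) : G) n')) (η x))
        = ((⟨w n' x, hx'⟩ : Dmod) : ℋ) := rfl
    rw [hwd n ⟨w n' x, hx'⟩ (σ x) _ e1, hwd (n * n') x (σ x) (η x) (hση x)]
    have e2 : Y (QuotientGroup.mk (ψ ((σ x : S) : G) (n * n'))) (η x)
        = Y (QuotientGroup.mk (ψ ((σ x : S) : G) n))
            (Y (QuotientGroup.mk (ψ ((σ x : S) : G) n')) (η x)) := by
      rw [map_mul (ψ ((σ x : S) : G)), QuotientGroup.mk_mul, map_mul Y]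
      rfl
    rw [e2]
  have hWone : ∀ ξ : ℋ, Wext 1 ξ = ξ := by
    refine hextH _ _ (Wext 1).continuous continuous_id ?_
    intro x
    rw [hWext 1 x, hwd 1 x (σ x) (η x) (hση x)]
    have e1 : Y (QuotientGroup.mk (ψ ((σ x : S) : G) 1)) (η x) = η x := by
      rw [map_one (ψ ((σ x : S) : G)), QuotientGroup.mk_one, map_one Y]
      rfl
    rw [e1, hση x]
  have hWinv1 : ∀ (n : N) (ξ : ℋ), Wext n (Wext n⁻¹ ξ) = ξ := by
    intro n ξ
    rw [hWmul, mul_inv_cancel]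
    exact hWone ξ
  have hWinv2 : ∀ (n : N) (ξ : ℋ), Wext n⁻¹ (Wext n ξ) = ξ := by
    intro n ξ
    rw [hWmul, inv_mul_cancel]
    exact hWone ξ
  let Wequiv : N → (ℋ ≃ₗᵢ[ℂ] ℋ) := fun n =>
    { toLinearEquiv := LinearEquiv.ofLinear ((Wext n : ℋ →ₗ[ℂ] ℋ)) ((Wext n⁻¹ : ℋ →ₗ[ℂ] ℋ))
        (by ext ξ; exact hWinv1 n ξ) (by ext ξ; exact hWinv2 n ξ)
      norm_map' := hWnorm n }
  let W : N →* (ℋ ≃ₗᵢ[ℂ] ℋ) :=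
    { toFun := Wequiv
      map_one' := by
        ext ξ
        exact hWone ξ
      map_mul' := by
        intro n n'
        ext ξ
        exact (hWmul n n' ξ).symm }
  have hWapp : ∀ (n : N) (ξ : ℋ), W n ξ = Wext n ξ := fun n ξ => rfl
  have hWcont : ∀ n : N, Continuous (W n) := fun n => (Wext n).continuous
  -- the defining property
  have hWdef : ∀ (h : Hsub) (s : S) (n : N),
      W n ((U (s : G)).symm ↑h) = (U (s : G)).symm ↑(Y (QuotientGroup.mk (ψ (s : G) n)) h) := by
    intro h s n
    have hxm : (U (s : G)).symm ↑h ∈ Dmod := (hmemD _).2 ⟨s, (hmemDmap _ _).2 ⟨h, rfl⟩⟩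
    have e0 : W n ((U (s : G)).symm ↑h) = w n ⟨_, hxm⟩ := hWext n ⟨_, hxm⟩
    rw [e0, hwd n ⟨_, hxm⟩ s h rfl]
  -- (i) covariance
  have hpsi_inv_cancel : ∀ (g : G) (n : N), ψ g (ψ g⁻¹ n) = n := by
    intro g n
    have h1 : ψ g * ψ g⁻¹ = 1 := by rw [← map_mul, mul_inv_cancel, map_one]
    calc ψ g (ψ g⁻¹ n) = (ψ g * ψ g⁻¹) n := rfl
      _ = n := by rw [h1]; rfl
  have hi_s : ∀ (s : S) (n : N) (ξ : ℋ),
      U (s : G) (W n ((U (s : G)).symm ξ)) = W (ψ (s : G) n) ξ := by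
    intro s n
    refine hextH _ _
      ((U (s : G)).continuous.comp ((hWcont n).comp (U (s : G)).symm.continuous))
      (hWcont (ψ (s : G) n)) ?_
    intro x
    rw [← hση x]
    have e1 : (U (s : G)).symm ((U ((σ x : S) : G)).symm ↑(η x))
        = (U ((σ x * s : S) : G)).symm ↑(η x) := by
      rw [show ((σ x * s : S) : G) = ((σ x : S) : G) * (s : G) from rfl, hUsymm_mul]
    rw [e1, hWdef (η x) (σ x * s) n, hWdef (η x) (σ x) (ψ (s : G) n)]
    have e2 : ∀ z : ℋ, U (s : G) ((U ((σ x * s : S) : G)).symm z)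
        = (U ((σ x : S) : G)).symm z := by
      intro z
      rw [show ((σ x * s : S) : G) = ((σ x : S) : G) * (s : G) from rfl, hUsymm_mul,
        LinearIsometryEquiv.apply_symm_apply]
    rw [e2]
    have e3 : ψ ((σ x * s : S) : G) n = ψ ((σ x : S) : G) (ψ (s : G) n) := by
      rw [show ((σ x * s : S) : G) = ((σ x : S) : G) * (s : G) from rfl, map_mul]
      rfl
    rw [e3]
  have hi_inv : ∀ g : G, (∀ (n : N) (ξ : ℋ), U g (W n ((U g).symm ξ)) = W (ψ g n) ξ) →
      ∀ (n : N) (ξ : ℋ), U g⁻¹ (W n ((U g⁻¹).symm ξ)) = W (ψ g⁻¹ n) ξ := by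
    intro g hg n ξ
    have hsymm2 : ∀ x : ℋ, (U g⁻¹).symm x = U g x := by
      intro x; rw [map_inv]; rfl
    rw [hUinv, hsymm2]
    have hthis := hg (ψ g⁻¹ n) (U g ξ)
    rw [LinearIsometryEquiv.symm_apply_apply, hpsi_inv_cancel] at hthis
    rw [← hthis, LinearIsometryEquiv.symm_apply_apply]
  have hi_mul : ∀ g₁ g₂ : G,
      (∀ (n : N) (ξ : ℋ), U g₁ (W n ((U g₁).symm ξ)) = W (ψ g₁ n) ξ) →
      (∀ (n : N) (ξ : ℋ), U g₂ (W n ((U g₂).symm ξ)) = W (ψ g₂ n) ξ) →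
      ∀ (n : N) (ξ : ℋ), U (g₁ * g₂) (W n ((U (g₁ * g₂)).symm ξ)) = W (ψ (g₁ * g₂) n) ξ := by
    intro g₁ g₂ h1 h2 n ξ
    rw [hUsymm_mul, hUmul, h2 n ((U g₁).symm ξ), h1 (ψ g₂ n) ξ]
    have e : ψ (g₁ * g₂) n = ψ g₁ (ψ g₂ n) := by rw [map_mul]; rfl
    rw [e]
  have hi : ∀ (g : G) (n : N) (ξ : ℋ), U g (W n ((U g).symm ξ)) = W (ψ g n) ξ := by
    intro g
    obtain ⟨s, hs, t, ht, rfl⟩ := hG g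
    exact hi_mul _ _ (hi_inv _ (hi_s ⟨s, hs⟩)) (hi_s ⟨t, ht⟩)
  -- (iii)
  have hiii : ∀ (h : Hsub) (n : N), W n ↑h = ↑(Y (QuotientGroup.mk n) h) := by
    intro h n
    obtain ⟨s⟩ := hSne
    have h1 : (U (s : G)).symm ↑(V s h) = ↑h := by
      rw [← hdil s h, LinearIsometryEquiv.symm_apply_apply]
    calc W n ↑h = W n ((U (s : G)).symm ↑(V s h)) := by rw [h1]
      _ = (U (s : G)).symm ↑(Y (QuotientGroup.mk (ψ (s : G) n)) (V s h)) := hWdef (V s h) s n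
      _ = (U (s : G)).symm ↑(V s (Y (QuotientGroup.mk n) h)) := by rw [← hA s n h]
      _ = ↑(Y (QuotientGroup.mk n) h) := by
          rw [← hdil s, LinearIsometryEquiv.symm_apply_apply]
  -- (ii)
  have hii : ∀ (h : Hsub), ∀ m ∈ M, W m ↑h = ↑h := by
    intro h m hm
    rw [hiii h m, (QuotientGroup.eq_one_iff m).2 hm, map_one]
    rfl
  -- (iv)
  have hiv : ∀ E : Submodule ℂ ℋ, IsClosed (E : Set ℋ) →
      (∀ ξ : ℋ, (∀ m ∈ M, W m ξ = ξ) → ξ ∈ E) →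
      (∀ (n : N), ∀ ξ ∈ E, W n ξ ∈ E) →
      (∀ (g : G), ∀ ξ ∈ E, U g ξ ∈ E) → E = ⊤ := by
    intro E hEc hfix hWE hUE
    have hHE : ∀ h : Hsub, (h : ℋ) ∈ E := fun h => hfix _ (fun m hm => hii h m hm)
    have hsubE : (⋃ s : S, (U (s : G)).symm '' (Hsub : Set ℋ)) ⊆ (E : Set ℋ) := by
      rintro ξ hξ
      obtain ⟨A, ⟨s, rfl⟩, h, hh, rfl⟩ := hξ
      have := hUE ((s : G))⁻¹ _ (hHE ⟨h, hh⟩)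
      rwa [hUinv] at this
    have hdE : Dense (E : Set ℋ) := hdense.mono hsubE
    have huniv : (E : Set ℋ) = Set.univ := by
      rw [← hEc.closure_eq]
      exact hdE.closure_eq
    exact Submodule.eq_top_iff'.2 fun ξ => Set.eq_univ_iff_forall.1 huniv ξ
  refine ⟨W, hWdef, hi, hii, hiii, hiv, ?_⟩
  -- uniqueness
  intro W' hW'
  refine MonoidHom.ext fun n => ?_
  ext ξ
  refine hextH (W' n) (W n) (W' n).continuous (hWcont n) ?_ ξ
  intro x
  rw [← hση x, hW' (η x) (σ x) n, hWdef (η x) (σ x) n]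
end

section
/- Suppose the smallest closed subspace of ℋ containing ℋ^M and invariant under all X_n (n ∈ N) and all U_g (g ∈ G) is ℋ itself. Then: (i) ℋ^M is invariant under X_n for every n ∈ N and under U_s for every s ∈ S; (ii) V_s := U_s|_{ℋ^M} defines an isometric representation of S on ℋ^M (i.e., each V_s is an isometry of ℋ^M and V_{st} = V_s V_t); and (iii) U is a minimal unitary dilation of V, i.e., ⋃_{s∈S} U_s*(ℋ^M) is dense in ℋ. -/
/-- Given the Hecke-pair setup `(N, G, S, ψ, M)` and a covariant pair
`(X, U)` of unitary representations on `ℋ` which is generated by its `M`-fixed vectors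
`ℋ^M`, the space `ℋ^M` is invariant under all `X_n` and all `U_s` (`s ∈ S`),
`V_s := U_s|_{ℋ^M}` is an isometric representation of `S`, and `U` is a minimal unitary
dilation of `V`, i.e. `⋃_{s ∈ S} U_s^*(ℋ^M)` is dense in `ℋ`. -/
theorem fixed_space_invariant_and_dilation_minimal
    {ℋ : Type*} [NormedAddCommGroup ℋ] [InnerProductSpace ℂ ℋ] [CompleteSpace ℋ]
    {N G : Type*} [Group N] [Group G]
    (S : Subsemigroup G)
    (hG : ∀ g : G, ∃ s ∈ S, ∃ t ∈ S, g = s⁻¹ * t)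
    (ψ : G →* MulAut N)
    (M : Subgroup N) [M.Normal]
    (hMsub : ∀ s : S, M ≤ Subgroup.map (ψ (s : G)).toMonoidHom M)
    (hMfin : ∀ s : S, (Subgroup.comap (ψ (s : G)).toMonoidHom M).relIndex M ≠ 0)
    (X : N →* (ℋ ≃ₗᵢ[ℂ] ℋ)) (U : G →* (ℋ ≃ₗᵢ[ℂ] ℋ))
    (hcov : ∀ (g : G) (n : N) (ξ : ℋ), U g (X n ((U g).symm ξ)) = X (ψ g n) ξ)
    -- `ℋ` is generated by `ℋ^M := {ξ | X_m ξ = ξ for all m ∈ M}`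
    (hgen : ∀ E : Submodule ℂ ℋ, IsClosed (E : Set ℋ) →
      (∀ ξ : ℋ, (∀ m ∈ M, X m ξ = ξ) → ξ ∈ E) →
      (∀ (n : N), ∀ ξ ∈ E, X n ξ ∈ E) →
      (∀ (g : G), ∀ ξ ∈ E, U g ξ ∈ E) → E = ⊤) :
    -- (i) `ℋ^M` is invariant under every `X_n` and every `U_s`, `s ∈ S`
    ((∀ (n : N) (ξ : ℋ), (∀ m ∈ M, X m ξ = ξ) → ∀ m ∈ M, X m (X n ξ) = X n ξ) ∧
     (∀ (s : S) (ξ : ℋ), (∀ m ∈ M, X m ξ = ξ) → ∀ m ∈ M, X m (U (s : G) ξ) = U (s : G) ξ)) ∧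
    -- (ii) `V_s := U_s|_{ℋ^M}` is an isometric representation of `S` on `ℋ^M`
    ((∀ (s : S) (ξ : ℋ), (∀ m ∈ M, X m ξ = ξ) → ‖U (s : G) ξ‖ = ‖ξ‖) ∧
     (∀ (s t : S) (ξ : ℋ), (∀ m ∈ M, X m ξ = ξ) →
        U ((s * t : S) : G) ξ = U (s : G) (U (t : G) ξ))) ∧
    -- (iii) `⋃_{s ∈ S} U_s^*(ℋ^M)` is dense in `ℋ`
    Dense (⋃ s : S, (U (s : G)).symm '' {ξ : ℋ | ∀ m ∈ M, X m ξ = ξ}) := by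
  classical
  set HM : Set ℋ := {ξ : ℋ | ∀ m ∈ M, X m ξ = ξ} with hHMdef
  have hmul : ∀ (a b : N) (ξ : ℋ), X (a * b) ξ = X a (X b ξ) := by
    intro a b ξ; rw [map_mul]; rfl
  have hUmul : ∀ (a b : G) (ξ : ℋ), U (a * b) ξ = U a (U b ξ) := by
    intro a b ξ; rw [map_mul]; rfl
  -- (i) first part: X_n preserves HM
  have hXinv : ∀ (n : N) (ξ : ℋ), ξ ∈ HM → X n ξ ∈ HM := by
    intro n ξ hξ m hm
    have h1 : n⁻¹ * m * n ∈ M := by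
      have := (inferInstance : M.Normal).conj_mem m hm n⁻¹
      simpa using this
    have : m * n = n * (n⁻¹ * m * n) := by group
    rw [← hmul, this, hmul, hξ _ h1]
  -- covariance rewritten
  have hcovL : ∀ (g : G) (n : N) (ξ : ℋ), U g (X n ξ) = X (ψ g n) (U g ξ) := by
    intro g n ξ
    have := hcov g n (U g ξ)
    simpa using this
  have hcov2 : ∀ (g : G) (n : N) (ξ : ℋ),
      X n ((U g).symm ξ) = (U g).symm (X (ψ g n) ξ) := by
    intro g n ξ
    have := hcov g n ξ
    exact (((U g).toLinearEquiv.symm_apply_eq).mpr this.symm).symm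
  -- (i) second part: U_s preserves HM
  have hUinv : ∀ (s : S) (ξ : ℋ), ξ ∈ HM → U (s : G) ξ ∈ HM := by
    intro s ξ hξ m hm
    obtain ⟨m', hm', rfl⟩ := hMsub s hm
    have : (ψ (s : G)).toMonoidHom m' = ψ (s : G) m' := rfl
    rw [this, ← hcovL, hξ _ hm']
  -- the union set
  set D : Set ℋ := ⋃ s : S, (U (s : G)).symm '' HM with hDdef
  -- HM is closed under addition/smul/zero
  have hHMadd : ∀ ξ η, ξ ∈ HM → η ∈ HM → ξ + η ∈ HM := by
    intro ξ η hξ hη m hm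
    rw [map_add, hξ _ hm, hη _ hm]
  have hHMsmul : ∀ (c : ℂ) ξ, ξ ∈ HM → c • ξ ∈ HM := by
    intro c ξ hξ m hm
    rw [map_smul, hξ _ hm]
  have hHMzero : (0 : ℋ) ∈ HM := by intro m hm; exact map_zero (X m).toLinearEquiv
  -- monotonicity: multiply index on the left
  have hsub : ∀ s q : S, (U (s : G)).symm '' HM ⊆ (U ((q * s : S) : G)).symm '' HM := by
    intro s q ξ hξ
    obtain ⟨η, hη, rfl⟩ := hξ
    refine ⟨U (q : G) η, hUinv q η hη, ?_⟩
    apply (U ((q * s : S) : G)).injective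
    rw [LinearIsometryEquiv.apply_symm_apply]
    have hc : ((q * s : S) : G) = (q : G) * (s : G) := rfl
    rw [hc, hUmul]
    simp
  -- directedness
  have hdir : ∀ s t : S, ∃ r : S,
      (U (s : G)).symm '' HM ⊆ (U (r : G)).symm '' HM ∧
      (U (t : G)).symm '' HM ⊆ (U (r : G)).symm '' HM := by
    intro s t
    obtain ⟨p, hp, q, hq, hpq⟩ := hG ((t : G) * (s : G)⁻¹)
    refine ⟨(⟨p, hp⟩ : S) * t, ?_, hsub t ⟨p, hp⟩⟩
    have hcoe : (((⟨p, hp⟩ : S) * t : S) : G) = ((⟨q, hq⟩ : S) * s : S) := by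
      show p * (t : G) = q * (s : G)
      have : p * ((t : G) * (s : G)⁻¹) = q := by rw [hpq]; group
      calc p * (t : G) = p * ((t : G) * (s : G)⁻¹) * (s : G) := by group
        _ = q * (s : G) := by rw [this]
    rw [hcoe]
    exact hsub s ⟨q, hq⟩
  -- S is nonempty
  obtain ⟨s₀g, hs₀, -, -, -⟩ := hG 1
  set s₀ : S := ⟨s₀g, hs₀⟩
  have hHMsubD : HM ⊆ D := by
    intro ξ hξ
    exact Set.mem_iUnion.2 ⟨s₀, U (s₀ : G) ξ, hUinv s₀ ξ hξ, by simp⟩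
  -- D is a submodule
  have hDadd : ∀ x y, x ∈ D → y ∈ D → x + y ∈ D := by
    intro x y hx hy
    obtain ⟨s, hxs⟩ := Set.mem_iUnion.1 hx
    obtain ⟨t, hyt⟩ := Set.mem_iUnion.1 hy
    obtain ⟨r, hsr, htr⟩ := hdir s t
    obtain ⟨a, ha, rfl⟩ := hsr hxs
    obtain ⟨b, hb, rfl⟩ := htr hyt
    exact Set.mem_iUnion.2 ⟨r, a + b, hHMadd a b ha hb, by rw [map_add]⟩
  have hDsmul : ∀ (c : ℂ) x, x ∈ D → c • x ∈ D := by
    intro c x hx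
    obtain ⟨s, a, ha, rfl⟩ := Set.mem_iUnion.1 hx
    exact Set.mem_iUnion.2 ⟨s, c • a, hHMsmul c a ha, by rw [map_smul]⟩
  have hDzero : (0 : ℋ) ∈ D := hHMsubD hHMzero
  set Dsub : Submodule ℂ ℋ :=
    { carrier := D
      add_mem' := fun {x y} hx hy => hDadd x y hx hy
      zero_mem' := hDzero
      smul_mem' := fun c {x} hx => hDsmul c x hx } with hDsubdef
  -- D is invariant under X_n and U_g
  have hXD : ∀ (n : N), Set.MapsTo (X n) D D := by
    intro n ξ hξ
    obtain ⟨s, η, hη, rfl⟩ := Set.mem_iUnion.1 hξ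
    rw [hcov2]
    exact Set.mem_iUnion.2 ⟨s, X (ψ (s : G) n) η, hXinv _ η hη, rfl⟩
  have hUD : ∀ (g : G), Set.MapsTo (U g) D D := by
    intro g ξ hξ
    obtain ⟨s, η, hη, rfl⟩ := Set.mem_iUnion.1 hξ
    obtain ⟨a, ha, b, hb, hab⟩ := hG ((s : G) * g⁻¹)
    have key : U (b : G) (U g ((U (s : G)).symm η)) = U a η := by
      have hba : b * g = a * (s : G) := by
        have : a * ((s : G) * g⁻¹) = b := by rw [hab]; group
        calc b * g = a * ((s : G) * g⁻¹) * g := by rw [this]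
          _ = a * (s : G) := by group
      rw [← hUmul, hba, hUmul]
      simp
    have : U g ((U (s : G)).symm η) = (U ((⟨b, hb⟩ : S) : G)).symm (U a η) := by
      apply (U ((⟨b, hb⟩ : S) : G)).injective
      rw [LinearIsometryEquiv.apply_symm_apply]
      exact key
    rw [this]
    exact Set.mem_iUnion.2 ⟨⟨b, hb⟩, U a η, hUinv ⟨a, ha⟩ η hη, rfl⟩
  -- closure is everything
  have hE : Dsub.topologicalClosure = ⊤ := by
    refine hgen _ Dsub.isClosed_topologicalClosure ?_ ?_ ?_
    · intro ξ hξ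
      exact Dsub.le_topologicalClosure (hHMsubD hξ)
    · intro n ξ hξ
      have hξ' : ξ ∈ closure D := hξ
      have : X n ξ ∈ closure D := map_mem_closure (X n).continuous hξ' (hXD n)
      exact this
    · intro g ξ hξ
      have hξ' : ξ ∈ closure D := hξ
      have : U g ξ ∈ closure D := map_mem_closure (U g).continuous hξ' (hUD g)
      exact this
  have hdense : Dense D := by
    rw [dense_iff_closure_eq]
    have : (Dsub.topologicalClosure : Set ℋ) = closure D := rfl
    rw [← this, hE]
    rfl
  refine ⟨⟨fun n ξ hξ => hXinv n ξ hξ, fun s ξ hξ => hUinv s ξ hξ⟩,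
    ⟨fun s ξ _ => (U (s : G)).norm_map ξ, fun s t ξ _ => hUmul (s : G) (t : G) ξ⟩,
    hdense⟩
end

section
/- Suppose the smallest closed subspace of ℋ containing ℋ^M and invariant under all X_n (n ∈ N) and all U_g (g ∈ G) is ℋ itself. Then ℋ^M is invariant under each X_n and each U_s (s ∈ S), each X_n acts on ℋ^M through the quotient N/M, so that Y_{nM} := X_n|_{ℋ^M} is a well-defined unitary representation of N/M on ℋ^M, and with V_s := U_s|_{ℋ^M} the pair (Y, V) satisfies the covariance relation: for all s ∈ S and n ∈ N, V_s Y_{nM} V_s* = [M : ψ_s⁻¹(M)]⁻¹ · Σ Y_{mM}, the sum being over the finitely many cosets mM ∈ N/M with ψ_s⁻¹(m)M = nM. -/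
open scoped InnerProductSpace
set_option maxHeartbeats 1000000

/-- Given the Hecke-pair setup `(N, G, S, ψ, M)` and a covariant pair
`(X, U)` on `ℋ` which is generated by its `M`-fixed vectors `ℋ^M`: the space `ℋ^M` is
invariant under each `X_n` and each `U_s` (`s ∈ S`), each `X_n` acts on `ℋ^M` through
`N/M`, so `Y_{nM} := X_n|_{ℋ^M}` is a well-defined unitary representation of `N/M`, and
with `V_s := U_s|_{ℋ^M}` the pair `(Y, V)` satisfies the covariance relation
`V_s Y_{nM} V_s^* = [M : ψ_s⁻¹(M)]⁻¹ ∑ Y_{mM}` (sum over cosets `mM` with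
`ψ_s⁻¹(m)M = nM`). -/
theorem restriction_is_covariant_pair
    {ℋ : Type*} [NormedAddCommGroup ℋ] [InnerProductSpace ℂ ℋ] [CompleteSpace ℋ]
    {N G : Type*} [Group N] [Group G]
    (S : Subsemigroup G)
    (hG : ∀ g : G, ∃ s ∈ S, ∃ t ∈ S, g = s⁻¹ * t)
    (ψ : G →* MulAut N)
    (M : Subgroup N) [M.Normal]
    (hMsub : ∀ s : S, M ≤ Subgroup.map (ψ (s : G)).toMonoidHom M)
    (hMfin : ∀ s : S, (Subgroup.comap (ψ (s : G)).toMonoidHom M).relIndex M ≠ 0)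
    (X : N →* (ℋ ≃ₗᵢ[ℂ] ℋ)) (U : G →* (ℋ ≃ₗᵢ[ℂ] ℋ))
    (hcov : ∀ (g : G) (n : N) (ξ : ℋ), U g (X n ((U g).symm ξ)) = X (ψ g n) ξ)
    -- the `M`-fixed space `ℋ^M`, as a closed subspace
    (HM : Submodule ℂ ℋ)
    (hHM : ∀ ξ : ℋ, ξ ∈ HM ↔ ∀ m ∈ M, X m ξ = ξ)
    (hHMc : IsClosed (HM : Set ℋ))
    -- `ℋ` is generated by `ℋ^M`
    (hgen : ∀ E : Submodule ℂ ℋ, IsClosed (E : Set ℋ) →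
      (∀ ξ : ℋ, (∀ m ∈ M, X m ξ = ξ) → ξ ∈ E) →
      (∀ (n : N), ∀ ξ ∈ E, X n ξ ∈ E) →
      (∀ (g : G), ∀ ξ ∈ E, U g ξ ∈ E) → E = ⊤) :
    haveI : CompleteSpace HM := hHMc.completeSpace_coe
    -- `ℋ^M` is invariant under each `X_n` and each `U_s`, the `X_n` act through `N/M`
    -- (so `Y` is well defined on `N/M`), and `(Y, V)` is covariant:
    ∃ (V : S → (HM →L[ℂ] HM)) (Y : (N ⧸ M) →* (HM ≃ₗᵢ[ℂ] HM)),
      (∀ (s : S) (ξ : HM), (V s ξ : ℋ) = U (s : G) ↑ξ) ∧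
      (∀ s t : S, V (s * t) = (V s).comp (V t)) ∧
      (∀ (n : N) (ξ : HM), (Y (QuotientGroup.mk n) ξ : ℋ) = X n ↑ξ) ∧
      (∀ (s : S) (n : N) (F : Finset N),
        (∀ m ∈ F, (QuotientGroup.mk (ψ ((s : G)⁻¹) m) : N ⧸ M) = QuotientGroup.mk n) →
        (∀ m : N, (QuotientGroup.mk (ψ ((s : G)⁻¹) m) : N ⧸ M) = QuotientGroup.mk n →
          ∃! f, f ∈ F ∧ (QuotientGroup.mk f : N ⧸ M) = QuotientGroup.mk m) →
        ∀ ξ : HM,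
          V s (Y (QuotientGroup.mk n) (ContinuousLinearMap.adjoint (V s) ξ))
            = (((Subgroup.comap (ψ (s : G)).toMonoidHom M).relIndex M : ℂ))⁻¹ •
                ∑ m ∈ F, Y (QuotientGroup.mk m) ξ) := by
  classical
  haveI : CompleteSpace HM := hHMc.completeSpace_coe
  have hXmul : ∀ (a b : N) (v : ℋ), X (a * b) v = X a (X b v) := by
    intro a b v; rw [map_mul]; rfl
  -- `HM` is invariant under each `X n`
  have hXmem : ∀ (n : N) (ξ : ℋ), ξ ∈ HM → X n ξ ∈ HM := by
    intro n ξ hξ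
    rw [hHM] at hξ ⊢
    intro m hm
    have hconj : n⁻¹ * m * n ∈ M := by
      simpa using Subgroup.Normal.conj_mem ‹M.Normal› m hm n⁻¹
    have h2 : X n (X (n⁻¹ * m * n) ξ) = X (m * n) ξ := by
      rw [← hXmul]
      congr 1
      group
    rw [← hXmul, ← h2, hξ _ hconj]
  -- `HM` is invariant under each `U s`, `s ∈ S`
  have hUmem : ∀ (s : S) (ξ : ℋ), ξ ∈ HM → U (s : G) ξ ∈ HM := by
    intro s ξ hξ
    rw [hHM] at hξ ⊢
    intro m hm
    obtain ⟨m', hm', hψm'⟩ := hMsub s hm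
    have hψm'' : ψ (s : G) m' = m := hψm'
    have : X m (U (s : G) ξ) = U (s : G) (X m' ((U (s : G)).symm (U (s : G) ξ))) := by
      rw [hcov (s : G) m' (U (s : G) ξ), hψm'']
    rw [this, LinearIsometryEquiv.symm_apply_apply, hξ m' hm']
  -- the restricted representation `V`
  set V : S → (HM →L[ℂ] HM) := fun s =>
    { toFun := fun ξ => ⟨U (s : G) ξ, hUmem s ξ ξ.2⟩
      map_add' := fun a b => Subtype.ext (by simp)
      map_smul' := fun c a => Subtype.ext (by simp)
      cont := Continuous.subtype_mk ((U (s : G)).continuous.comp continuous_subtype_val) _ }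
    with hVdef
  have hVapp : ∀ (s : S) (ξ : HM), (V s ξ : ℋ) = U (s : G) ↑ξ := fun s ξ => rfl
  have hVmul : ∀ s t : S, V (s * t) = (V s).comp (V t) := by
    intro s t
    apply ContinuousLinearMap.ext
    intro ξ
    apply Subtype.ext
    show (U ((s * t : S) : G) (ξ : ℋ)) = U (s : G) (U (t : G) (ξ : ℋ))
    rw [show ((s * t : S) : G) = (s : G) * (t : G) from rfl, map_mul]
    rfl
  -- the restricted representation of `N`
  set Y₁ : N →* (HM ≃ₗᵢ[ℂ] HM) :=
    { toFun := fun n =>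
        { toFun := fun ξ => ⟨X n ξ, hXmem n ξ ξ.2⟩
          invFun := fun ξ => ⟨X n⁻¹ ξ, hXmem n⁻¹ ξ ξ.2⟩
          map_add' := fun a b => Subtype.ext (by simp)
          map_smul' := fun c a => Subtype.ext (by simp)
          left_inv := fun a => Subtype.ext (by
            show X n⁻¹ (X n ↑a) = ↑a
            rw [← hXmul]
            simp)
          right_inv := fun a => Subtype.ext (by
            show X n (X n⁻¹ ↑a) = ↑a
            rw [← hXmul]
            simp)
          norm_map' := fun a => (X n).norm_map ↑a }
      map_one' := LinearIsometryEquiv.ext fun a => Subtype.ext (by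
        show X 1 ↑a = ↑a
        simp)
      map_mul' := fun m n => LinearIsometryEquiv.ext fun a => Subtype.ext (by
        show X (m * n) ↑a = X m (X n ↑a)
        exact hXmul m n ↑a) }
    with hY₁def
  have hker : ∀ m ∈ M, Y₁ m = 1 := fun m hm =>
    LinearIsometryEquiv.ext fun a => Subtype.ext ((hHM _).1 a.2 m hm)
  set Y : (N ⧸ M) →* (HM ≃ₗᵢ[ℂ] HM) := QuotientGroup.lift M Y₁ hker with hYdef
  have hYapp : ∀ (n : N) (ξ : HM), (Y (QuotientGroup.mk n) ξ : ℋ) = X n ↑ξ := fun n ξ => rfl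
  refine ⟨V, Y, hVapp, hVmul, hYapp, ?_⟩
  -- the covariance relation
  intro s n F hF1 hF2 ξ
  set L := Subgroup.comap (ψ (s : G)).toMonoidHom M with hLdef
  set k := L.relIndex M with hkdef
  have hLmem : ∀ x : N, x ∈ L ↔ ψ (s : G) x ∈ M := fun x => Iff.rfl
  have hLM : L ≤ M := by
    intro x hx
    obtain ⟨y, hy, hxy⟩ := hMsub s ((hLmem x).1 hx)
    have : y = x := (ψ (s : G)).injective hxy
    rwa [← this]
  have hpsiinv : ∀ x : N, ψ ((s : G)⁻¹) x = (ψ (s : G)).symm x := fun x => by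
    rw [map_inv]; rfl
  have hpsi_si : ∀ x : N, ψ (s : G) (ψ ((s : G)⁻¹) x) = x := fun x => by
    rw [hpsiinv]; exact (ψ (s : G)).apply_symm_apply x
  have hpsi_is : ∀ x : N, ψ ((s : G)⁻¹) (ψ (s : G) x) = x := fun x => by
    rw [hpsiinv]; exact (ψ (s : G)).symm_apply_apply x
  set w : ℋ := (U (s : G)).symm ↑ξ with hwdef
  -- `w` is fixed by `L`
  have hwfix : ∀ l ∈ L, X l w = w := by
    intro l hl
    have h1 := hcov (s : G) l ↑ξ
    have h2 : X (ψ (s : G) l) (ξ : ℋ) = ↑ξ := (hHM _).1 ξ.2 _ ((hLmem l).1 hl)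
    have h3 := h1.trans h2
    have h4 := congrArg (U (s : G)).symm h3
    simpa using h4
  -- the coset representatives `μ f` in `M`
  set μ : N → N := fun f => n⁻¹ * ψ ((s : G)⁻¹) f with hμdef
  have hμM : ∀ f : N,
      (QuotientGroup.mk (ψ ((s : G)⁻¹) f) : N ⧸ M) = QuotientGroup.mk n → μ f ∈ M := by
    intro f hf
    have h := QuotientGroup.eq.mp hf
    have h2 := M.inv_mem h
    simpa [hμdef, mul_inv_rev] using h2
  have hψμ : ∀ f : N, ψ (s : G) (n * μ f) = f := by
    intro f
    rw [hμdef]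
    simp only [mul_inv_cancel_left]
    exact hpsi_si f
  have hψμ' : ∀ f : N, ψ (s : G) (μ f) = (ψ (s : G) n)⁻¹ * f := by
    intro f
    have h := hψμ f
    rw [map_mul] at h
    exact eq_inv_mul_of_mul_eq h
  have hcomp2 : ∀ f b : N, ψ (s : G) ((μ f)⁻¹ * b) = f⁻¹ * ψ (s : G) (n * b) := by
    intro f b
    simp only [map_mul, map_inv, hψμ']
    group
  -- the coset criterion
  have hLrel : ∀ f ∈ F, ∀ b : N, (μ f)⁻¹ * b ∈ L →
      (QuotientGroup.mk f : N ⧸ M) = QuotientGroup.mk (ψ (s : G) (n * b)) := by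
    intro f hf b hb
    rw [QuotientGroup.eq, ← hcomp2 f b]
    exact (hLmem _).1 hb
  -- the selection function from `hF2`
  have hex : ∀ c : N, c ∈ M →
      ∃! f, f ∈ F ∧ (QuotientGroup.mk f : N ⧸ M) = QuotientGroup.mk (ψ (s : G) (n * c)) := by
    intro c hc
    apply hF2
    rw [hpsi_is]
    rw [QuotientGroup.eq]
    simpa using hc
  set sel : N → N := fun c => if hc : c ∈ M then Classical.choose (hex c hc) else 1 with hseldef
  have hselspec : ∀ c : N, ∀ _ : c ∈ M, sel c ∈ F ∧
      (QuotientGroup.mk (sel c) : N ⧸ M) = QuotientGroup.mk (ψ (s : G) (n * c)) := by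
    intro c hc
    rw [hseldef]
    simp only [dif_pos hc]
    exact (Classical.choose_spec (hex c hc)).1
  have hseluniq : ∀ c : N, ∀ _ : c ∈ M, ∀ f' : N, f' ∈ F →
      (QuotientGroup.mk f' : N ⧸ M) = QuotientGroup.mk (ψ (s : G) (n * c)) → f' = sel c := by
    intro c hc f' hf' hmk
    rw [hseldef]
    simp only [dif_pos hc]
    exact (Classical.choose_spec (hex c hc)).2 f' ⟨hf', hmk⟩
  have hμF : ∀ f ∈ F, μ f ∈ M := fun f hf => hμM f (hF1 f hf)
  -- step relation for the reindexing
  have hLe : ∀ m ∈ M, ∀ f ∈ F, (μ (sel (m * μ f)))⁻¹ * (m * μ f) ∈ L := by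
    intro m hm f hf
    have hc : m * μ f ∈ M := M.mul_mem hm (hμF f hf)
    have h2 := (hselspec _ hc).2
    rw [hLmem, hcomp2]
    exact QuotientGroup.eq.mp h2
  have hselF : ∀ m ∈ M, ∀ f ∈ F, sel (m * μ f) ∈ F := by
    intro m hm f hf
    exact (hselspec _ (M.mul_mem hm (hμF f hf))).1
  have hswap : ∀ m ∈ M, ∀ f ∈ F, sel (m⁻¹ * μ (sel (m * μ f))) = f := by
    intro m hm f hf
    have hFs : sel (m * μ f) ∈ F := hselF m hm f hf
    have he := hLe m hm f hf
    have he' : (μ f)⁻¹ * (m⁻¹ * μ (sel (m * μ f))) ∈ L := by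
      have h := L.inv_mem he
      simpa [mul_inv_rev, mul_assoc] using h
    have hc' : m⁻¹ * μ (sel (m * μ f)) ∈ M :=
      M.mul_mem (M.inv_mem hm) (hμF _ hFs)
    exact (hseluniq _ hc' f hf (hLrel f hf _ he')).symm
  -- the averaged vector
  set ζvec : ℋ := (k : ℂ)⁻¹ • ∑ f ∈ F, X (μ f) w with hζdef
  have hζmem : ζvec ∈ HM := by
    rw [hHM]
    intro m hm
    have hmain : ∀ f ∈ F, X m (X (μ f) w) = X (μ (sel (m * μ f))) w := by
      intro f hf
      have h1 : X m (X (μ f) w) = X (m * μ f) w := (hXmul m (μ f) w).symm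
      have he := hLe m hm f hf
      rw [h1]
      calc X (m * μ f) w
          = X (μ (sel (m * μ f)) * ((μ (sel (m * μ f)))⁻¹ * (m * μ f))) w := by
            rw [mul_inv_cancel_left]
        _ = X (μ (sel (m * μ f))) (X ((μ (sel (m * μ f)))⁻¹ * (m * μ f)) w) :=
            hXmul _ _ w
        _ = X (μ (sel (m * μ f))) w := by rw [hwfix _ he]
    have hXm : X m ζvec = (k : ℂ)⁻¹ • ∑ f ∈ F, X m (X (μ f) w) := by
      rw [hζdef, map_smul, map_sum]
    rw [hXm, Finset.sum_congr rfl hmain, hζdef]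
    congr 1
    refine Finset.sum_nbij' (fun f => sel (m * μ f)) (fun f => sel (m⁻¹ * μ f))
      (fun f hf => hselF m hm f hf)
      (fun f hf => by
        have := hselF m⁻¹ (M.inv_mem hm) f hf
        simpa using this)
      (fun f hf => hswap m hm f hf)
      (fun f hf => by
        have := hswap m⁻¹ (M.inv_mem hm) f hf
        simpa using this)
      (fun f hf => rfl)
  -- cardinality: `F.card = k`
  have hcard : F.card = k := by
    have hbij : Function.Bijective
        (fun f : {x // x ∈ F} =>
          (QuotientGroup.mk ⟨μ f, hμF f f.2⟩ : M ⧸ L.subgroupOf M)) := by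
      constructor
      · intro f f' hff'
        have h := QuotientGroup.eq.mp hff'
        rw [Subgroup.mem_subgroupOf] at h
        have h' : (μ (f : N))⁻¹ * μ (f' : N) ∈ L := by simpa using h
        have h1 : (QuotientGroup.mk (f : N) : N ⧸ M)
            = QuotientGroup.mk (ψ (s : G) (n * μ (f' : N))) := hLrel f f.2 _ h'
        have h2 : (QuotientGroup.mk (f' : N) : N ⧸ M)
            = QuotientGroup.mk (ψ (s : G) (n * μ (f' : N))) := by
          refine hLrel f' f'.2 _ ?_
          simpa using L.one_mem
        have hu1 := hseluniq _ (hμF f' f'.2) _ f.2 h1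
        have hu2 := hseluniq _ (hμF f' f'.2) _ f'.2 h2
        exact Subtype.ext (hu1.trans hu2.symm)
      · intro q
        induction q using QuotientGroup.induction_on with
        | H c =>
          have hcM : (c : N) ∈ M := c.2
          refine ⟨⟨sel c, (hselspec c hcM).1⟩, ?_⟩
          rw [QuotientGroup.eq, Subgroup.mem_subgroupOf]
          have hgoal : (μ (sel (c : N)))⁻¹ * (c : N) ∈ L := by
            rw [hLmem, hcomp2]
            exact QuotientGroup.eq.mp (hselspec (c : N) hcM).2
          simpa using hgoal
    calc F.card = Nat.card {x // x ∈ F} := (Nat.card_eq_finsetCard F).symm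
      _ = Nat.card (M ⧸ L.subgroupOf M) := Nat.card_congr (Equiv.ofBijective _ hbij)
      _ = k := rfl
  have hknez : (k : ℂ) ≠ 0 := Nat.cast_ne_zero.mpr (hMfin s)
  -- identify the adjoint of `V s` applied to `ξ`
  have hζη : ∀ η : HM, ⟪ζvec, (η : ℋ)⟫_ℂ = ⟪w, (η : ℋ)⟫_ℂ := by
    intro η
    have hterm : ∀ f ∈ F, ⟪X (μ f) w, (η : ℋ)⟫_ℂ = ⟪w, (η : ℋ)⟫_ℂ := by
      intro f hf
      have hfix : X (μ f) (η : ℋ) = (η : ℋ) := (hHM _).1 η.2 _ (hμF f hf)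
      calc ⟪X (μ f) w, (η : ℋ)⟫_ℂ = ⟪X (μ f) w, X (μ f) (η : ℋ)⟫_ℂ := by rw [hfix]
        _ = ⟪w, (η : ℋ)⟫_ℂ := (X (μ f)).inner_map_map w (η : ℋ)
    rw [hζdef, inner_smul_left, sum_inner, Finset.sum_congr rfl hterm,
      Finset.sum_const, hcard]
    simp only [← Nat.cast_smul_eq_nsmul (R := ℂ)]
    rw [smul_eq_mul]
    rw [show (starRingEnd ℂ) ((k : ℂ))⁻¹ = ((k : ℂ))⁻¹ by simp]
    rw [← mul_assoc, inv_mul_cancel₀ hknez, one_mul]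
  have hadj : ContinuousLinearMap.adjoint (V s) ξ = ⟨ζvec, hζmem⟩ := by
    apply ext_inner_right ℂ
    intro η
    rw [ContinuousLinearMap.adjoint_inner_left]
    show ⟪(ξ : ℋ), ((V s η : HM) : ℋ)⟫_ℂ = ⟪ζvec, (η : ℋ)⟫_ℂ
    rw [hVapp, hζη η]
    have hUw : U (s : G) w = (ξ : ℋ) := by
      rw [hwdef]; exact (U (s : G)).apply_symm_apply ↑ξ
    calc ⟪(ξ : ℋ), U (s : G) (η : ℋ)⟫_ℂ
        = ⟪U (s : G) w, U (s : G) (η : ℋ)⟫_ℂ := by rw [hUw]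
      _ = ⟪w, (η : ℋ)⟫_ℂ := (U (s : G)).inner_map_map w (η : ℋ)
  -- final computation
  rw [hadj]
  apply Subtype.ext
  rw [hVapp, hYapp]
  have hRHS : ((((k : ℂ))⁻¹ • ∑ m ∈ F, Y (QuotientGroup.mk m) ξ : HM) : ℋ)
      = (k : ℂ)⁻¹ • ∑ f ∈ F, X f (ξ : ℋ) := by
    push_cast
    congr 1
  show U (s : G) (X n ζvec) = _
  rw [hRHS]
  have hterm : ∀ f ∈ F, U (s : G) (X n (X (μ f) w)) = X f (ξ : ℋ) := by
    intro f hf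
    have h1 : X n (X (μ f) w) = X (n * μ f) w := (hXmul n (μ f) w).symm
    rw [h1, hwdef, hcov (s : G) (n * μ f) ↑ξ, hψμ f]
  calc U (s : G) (X n ζvec)
      = U (s : G) ((k : ℂ)⁻¹ • ∑ f ∈ F, X n (X (μ f) w)) := by
        rw [hζdef, map_smul, map_sum]
    _ = (k : ℂ)⁻¹ • ∑ f ∈ F, U (s : G) (X n (X (μ f) w)) := by
        rw [map_smul, map_sum]
    _ = (k : ℂ)⁻¹ • ∑ f ∈ F, X f (ξ : ℋ) := by
        rw [Finset.sum_congr rfl hterm]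
end

section
/- Let (S, ≤) be a nonempty directed partially ordered (or preordered) set, and let {G_s}_{s∈S} be groups together with surjective group homomorphisms π^s_t : G_t → G_s for all s ≤ t, satisfying π^s_s = id and π^s_t ∘ π^t_u = π^s_u whenever s ≤ t ≤ u. Assume each bonding map π^s_t has finite kernel. Let L := {(x_s) ∈ ∏_{s∈S} G_s : π^s_t(x_t) = x_s whenever s ≤ t} be the inverse limit. Then for every s ∈ S the canonical projection π^s : L → G_s, (x_r) ↦ x_s, is surjective. -/
/-!
Fix `g ∈ G s`. For `r ≥ s` the fibre of `π^s_r` over `g` is a coset of the finite kernel, hence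
finite, and it is nonempty by surjectivity; the bonding maps send fibres to fibres. By Kőnig's
lemma (a directed inverse limit of nonempty finite sets is nonempty) there is a compatible family
of points in these fibres, and since `{r | s ≤ r}` is cofinal it extends to a point of the
full inverse limit lying over `g`.
-/

open CategoryTheory Opposite

theorem MonoidHom.finite_preimage_singleton {G H : Type*} [Group G] [Group H] (f : G →* H)
    [Finite f.ker] (y : H) : (f ⁻¹' {y}).Finite := by
  by_cases hy : y ∈ Set.range f
  · obtain ⟨x, rfl⟩ := hy
    exact Set.finite_coe_iff.mp (Finite.of_equiv _ (f.fiberEquivKer x).symm)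
  · rw [Set.preimage_singleton_eq_empty.mpr hy]
    exact Set.finite_empty

instance IsDirectedOrder.subtype_ge {ι : Type*} [Preorder ι] [IsDirectedOrder ι] (i : ι) :
    IsDirectedOrder {j // i ≤ j} where
  directed a b :=
    let ⟨c, hac, hbc⟩ := exists_ge_ge a.1 b.1
    ⟨⟨c, a.2.trans hac⟩, hac, hbc⟩

namespace InverseSystem

variable {ι : Type*} [Preorder ι] {F : ι → Type*} (f : ∀ ⦃i j : ι⦄, i ≤ j → F j → F i)
  [InverseSystem f]

def fiberFunctor {i : ι} (x : F i) : {j // i ≤ j}ᵒᵖ ⥤ Type _ where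
  obj j := f j.unop.2 ⁻¹' {x}
  map {j k} g := TypeCat.ofHom fun y =>
    ⟨f (leOfHom g.unop) y.1, by
      simpa only [Set.mem_preimage, map_map (f := f)] using y.2⟩
  map_id j := by
    ext y
    exact map_self (f := f) y.1
  map_comp g h := by
    ext y
    exact (map_map (f := f) _ _ y.1).symm

variable [IsDirectedOrder ι]

theorem exists_compatible_extension {i : ι} (y : ∀ j : {j // i ≤ j}, F j)
    (hy : ∀ ⦃j k : {j // i ≤ j}⦄ (h : j ≤ k), f h (y k) = y j) :
    ∃ z : ∀ j, F j, (∀ ⦃j k⦄ (h : j ≤ k), f h (z k) = z j) ∧ z i = y ⟨i, le_rfl⟩ := by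
  have agree : ∀ (j : ι) (a b : {j // i ≤ j}) (ha : j ≤ a) (hb : j ≤ b),
      f ha (y a) = f hb (y b) := by
    intro j a b ha hb
    obtain ⟨c, hac, hbc⟩ := exists_ge_ge a b
    rw [← hy hac, ← hy hbc, map_map (f := f), map_map (f := f)]
  have cofinal (j : ι) : ∃ a : {j // i ≤ j}, j ≤ a :=
    let ⟨c, hjc, hic⟩ := exists_ge_ge j i
    ⟨⟨c, hic⟩, hjc⟩
  choose t ht using cofinal
  refine ⟨fun j => f (ht j) (y (t j)), fun j k h => ?_, ?_⟩
  · rw [map_map (f := f), agree]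
  · exact (agree i (t i) ⟨i, le_rfl⟩ (ht i) le_rfl).trans (map_self (f := f) _)

theorem surjective_eval_of_finite_fibers
    (hsurj : ∀ ⦃i j : ι⦄ (h : i ≤ j), Function.Surjective (f h))
    (hfin : ∀ ⦃i j : ι⦄ (h : i ≤ j) (x : F i), (f h ⁻¹' {x}).Finite) (i : ι) :
    Function.Surjective
      (fun x : {x : ∀ j, F j // ∀ ⦃j k⦄ (h : j ≤ k), f h (x k) = x j} => x.1 i) := by
  intro x
  have : ∀ j, Finite ((fiberFunctor f x).obj j) := fun j => (hfin j.unop.2 x).to_subtype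
  have : ∀ j, Nonempty ((fiberFunctor f x).obj j) := fun j =>
    let ⟨y, hy⟩ := hsurj j.unop.2 x
    ⟨⟨y, hy⟩⟩
  obtain ⟨y, hy⟩ := nonempty_sections_of_finite_inverse_system (fiberFunctor f x)
  obtain ⟨z, hz, hzi⟩ := exists_compatible_extension f (fun j => (y (op j)).1)
    fun j k h => congrArg Subtype.val (hy (homOfLE h).op)
  have hyi : (y (op ⟨i, le_rfl⟩)).1 = x := (map_self (f := f) _).symm.trans (y _).2
  exact ⟨⟨z, hz⟩, hzi.trans hyi⟩

end InverseSystem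

theorem inverseLimit_projection_surjective_general
    {S : Type*} [Preorder S] [IsDirected S (· ≤ ·)]
    (G : S → Type*) [∀ s, Group (G s)]
    (π : ∀ ⦃s t : S⦄, s ≤ t → (G t →* G s))
    (hsurj : ∀ ⦃s t : S⦄ (h : s ≤ t), Function.Surjective (π h))
    (hid : ∀ s : S, π (le_refl s) = MonoidHom.id (G s))
    (hcomp : ∀ ⦃s t u : S⦄ (hst : s ≤ t) (htu : t ≤ u),
      (π hst).comp (π htu) = π (hst.trans htu))
    (hker : ∀ ⦃s t : S⦄ (h : s ≤ t), Finite (π h).ker)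
    (s : S) :
    Function.Surjective
      (fun x : {x : ∀ r : S, G r // ∀ ⦃r t : S⦄ (h : r ≤ t), π h (x t) = x r} =>
        x.1 s) := by
  have : InverseSystem fun _ _ h => π h :=
    ⟨fun s => DFunLike.congr_fun (hid s), fun _ _ _ hst htu => DFunLike.congr_fun (hcomp hst htu)⟩
  exact InverseSystem.surjective_eval_of_finite_fibers _ hsurj
    (fun _ _ h => (π h).finite_preimage_singleton) s

/-- For an inverse system of groups over a nonempty directed index set
with surjective bonding homomorphisms having finite kernels, the canonical projections
from the inverse limit to the groups of the system are surjective. -/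
theorem inverseLimit_projection_surjective
    {S : Type*} [Preorder S] [Nonempty S] [IsDirected S (· ≤ ·)]
    (G : S → Type*) [∀ s, Group (G s)]
    (π : ∀ ⦃s t : S⦄, s ≤ t → (G t →* G s))
    (hsurj : ∀ ⦃s t : S⦄ (h : s ≤ t), Function.Surjective (π h))
    (hid : ∀ s : S, π (le_refl s) = MonoidHom.id (G s))
    (hcomp : ∀ ⦃s t u : S⦄ (hst : s ≤ t) (htu : t ≤ u),
      (π hst).comp (π htu) = π (hst.trans htu))
    (hker : ∀ ⦃s t : S⦄ (h : s ≤ t), Finite (π h).ker)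
    (s : S) :
    Function.Surjective
      (fun x : {x : ∀ r : S, G r // ∀ ⦃r t : S⦄ (h : r ≤ t), π h (x t) = x r} =>
        x.1 s) :=
  inverseLimit_projection_surjective_general G π hsurj hid hcomp hker s
end

section
/- For each t ∈ S there exists a group automorphism θ_t of N_∞ such that for every s ∈ S and every x ∈ N_∞: π^s(θ_t(x)) = ψ̄_t(π^{st}(x)), where ψ̄_t : N/ψ_{st}⁻¹(M) → N/ψ_s⁻¹(M) is the isomorphism induced by ψ_t (which maps ψ_{st}⁻¹(M) onto ψ_s⁻¹(M)); moreover θ_t(j(n)) = j(ψ_t(n)) for every n ∈ N. -/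
set_option maxHeartbeats 2000000 in
/-- In the Hecke-pair setup `(N, G, S, ψ, M)`, let
`N_∞ = lim_{s ∈ S} N/ψ_s⁻¹(M)` be the inverse limit over the right-invariant order
`s ≤_r t ⟺ t ∈ Ss`, realized as the subgroup of compatible families in
`∏_{s ∈ S} N/ψ_s⁻¹(M)`.  For each `t ∈ S` there is a group automorphism `θ_t` of `N_∞`
with `π^s(θ_t(x)) = ψ̄_t(π^{st}(x))` for all `s ∈ S`, `x ∈ N_∞` (where
`ψ̄_t : N/ψ_{st}⁻¹(M) → N/ψ_s⁻¹(M)` is induced by `ψ_t`), and `θ_t ∘ j = j ∘ ψ_t` on `N`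
(`j` being the diagonal embedding). -/
theorem exists_theta_automorphism
    {N G : Type*} [Group N] [Group G]
    (S : Subsemigroup G)
    (hG : ∀ g : G, ∃ s ∈ S, ∃ t ∈ S, g = s⁻¹ * t)
    (hrev : ∀ s t : S, ∃ u v : S, u * s = v * t)
    (ψ : G →* MulAut N)
    (M : Subgroup N) [M.Normal]
    (hMsub : ∀ s : S, M ≤ Subgroup.map (ψ (s : G)).toMonoidHom M)
    (hMfin : ∀ s : S, (Subgroup.comap (ψ (s : G)).toMonoidHom M).relIndex M ≠ 0)
    (Ninf : Subgroup (∀ s : S, N ⧸ Subgroup.comap (ψ (s : G)).toMonoidHom M))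
    (hNinf : ∀ x, x ∈ Ninf ↔
      ∀ (s t' : S), (∃ u : S, t' = u * s) → ∀ n : N,
        x t' = QuotientGroup.mk n → x s = QuotientGroup.mk n)
    (t : S) :
    ∃ θ : Ninf ≃* Ninf,
      (∀ (x : Ninf) (s : S) (n : N),
        x.1 (s * t) = QuotientGroup.mk n →
        (θ x).1 s = QuotientGroup.mk (ψ (t : G) n)) ∧
      (∀ (x : Ninf) (n : N), (∀ s : S, x.1 s = QuotientGroup.mk n) →
        ∀ s : S, (θ x).1 s = QuotientGroup.mk (ψ (t : G) n)) := by
  classical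
  -- basic facts
  have hcancel : ∀ (g : G) (n : N), ψ g (ψ g⁻¹ n) = n := by
    intro g n
    rw [← MulAut.mul_apply, ← map_mul, mul_inv_cancel, map_one, MulAut.one_apply]
  have hA : ∀ (u : S) (n : N), ψ (u : G) n ∈ M → n ∈ M := by
    intro u n hn
    obtain ⟨m, hmM, hm⟩ := hMsub u hn
    simp only [MulEquiv.coe_toMonoidHom] at hm
    rwa [← (ψ (u : G)).injective hm]
  have hAinv : ∀ (u : S) (m : N), m ∈ M → ψ ((u : G)⁻¹) m ∈ M := by
    intro u m hm
    apply hA u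
    rwa [hcancel]
  have hKmem : ∀ (r : S) (n : N),
      n ∈ Subgroup.comap (ψ (r : G)).toMonoidHom M ↔ ψ (r : G) n ∈ M := by
    intro r n
    simp [Subgroup.mem_comap]
  have hcoe : ∀ a b : S, ((a * b : S) : G) = (a : G) * (b : G) := fun a b => rfl
  have hpsimul : ∀ (a b : S) (n : N), ψ ((a * b : S) : G) n = ψ (a : G) (ψ (b : G) n) := by
    intro a b n
    rw [hcoe, map_mul, MulAut.mul_apply]
  -- monotonicity : K (w * r) ≤ K r
  have hB : ∀ (w r : S) (n : N), n ∈ Subgroup.comap (ψ ((w * r : S) : G)).toMonoidHom M →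
      n ∈ Subgroup.comap (ψ (r : G)).toMonoidHom M := by
    intro w r n hn
    rw [hKmem] at hn ⊢
    rw [hpsimul] at hn
    exact hA w _ hn
  -- key lemma: ψ t⁻¹ z ∈ K r whenever u' * r = v' * t and ψ v' z ∈ M
  have hKr : ∀ (r u' v' : S) (z : N), u' * r = v' * t → ψ ((v' : S) : G) z ∈ M →
      ψ ((t : G)⁻¹) z ∈ Subgroup.comap (ψ (r : G)).toMonoidHom M := by
    intro r u' v' z h1 hz
    have h1c : (u' : G) * (r : G) = (v' : G) * (t : G) := congrArg Subtype.val h1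
    have hrel : (r : G) * (t : G)⁻¹ = (u' : G)⁻¹ * (v' : G) := by
      apply mul_left_cancel (a := (u' : G))
      rw [← mul_assoc, h1c]
      group
    rw [hKmem, ← MulAut.mul_apply, ← map_mul, hrel, map_mul, MulAut.mul_apply]
    exact hAinv u' _ hz
  -- the homomorphism Θ
  have hle : ∀ s : S, Subgroup.comap (ψ ((s * t : S) : G)).toMonoidHom M ≤
      Subgroup.comap (ψ (t : G)).toMonoidHom (Subgroup.comap (ψ (s : G)).toMonoidHom M) := by
    intro s n hn
    rw [hKmem] at hn
    rw [hpsimul] at hn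
    simp only [Subgroup.mem_comap, MulEquiv.coe_toMonoidHom]
    exact hn
  set Θmap : ∀ s : S, (N ⧸ Subgroup.comap (ψ ((s * t : S) : G)).toMonoidHom M) →*
      (N ⧸ Subgroup.comap (ψ (s : G)).toMonoidHom M) :=
    fun s => QuotientGroup.map _ _ (ψ (t : G)).toMonoidHom (hle s) with hΘmap
  have Θmap_mk : ∀ (s : S) (n : N),
      Θmap s (QuotientGroup.mk n) = QuotientGroup.mk (ψ (t : G) n) := by
    intro s n
    rw [hΘmap]
    rw [QuotientGroup.map_mk]
    rfl
  have hmem : ∀ x : Ninf, (fun s => Θmap s (x.1 (s * t))) ∈ Ninf := by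
    intro x
    rw [hNinf]
    rintro s t' ⟨u, rfl⟩ n hn
    obtain ⟨m, hm⟩ := QuotientGroup.mk_surjective (x.1 (u * s * t))
    have hx := (hNinf x.1).mp x.2
    have hst : x.1 (s * t) = QuotientGroup.mk m := by
      apply hx (s * t) (u * s * t) ⟨u, mul_assoc u s t⟩ m hm.symm
    have hust : Θmap (u * s) (x.1 (u * s * t)) = QuotientGroup.mk (ψ (t : G) m) := by
      rw [← hm, Θmap_mk]
    rw [hust] at hn
    have hdiff : (ψ (t : G) m)⁻¹ * n ∈ Subgroup.comap (ψ ((u * s : S) : G)).toMonoidHom M :=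
      QuotientGroup.eq.mp hn
    have hdiff' := hB u s _ hdiff
    show Θmap s (x.1 (s * t)) = QuotientGroup.mk n
    rw [hst, Θmap_mk]
    exact QuotientGroup.eq.mpr hdiff'
  set Θ : Ninf →* Ninf :=
    { toFun := fun x => ⟨fun s => Θmap s (x.1 (s * t)), hmem x⟩
      map_one' := by
        ext s
        show Θmap s ((1 : Ninf).1 (s * t)) = (1 : Ninf).1 s
        have h1 : (1 : Ninf).1 (s * t) = QuotientGroup.mk 1 := rfl
        have h2 : ((1 : Ninf).1 s : N ⧸ _) = QuotientGroup.mk 1 := rfl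
        rw [h1, h2, Θmap_mk, map_one]
      map_mul' := by
        intro x y
        ext s
        show Θmap s ((x * y : Ninf).1 (s * t)) = _
        have : (x * y : Ninf).1 (s * t) = x.1 (s * t) * y.1 (s * t) := rfl
        rw [this, map_mul]
        rfl } with hΘ
  have Θ_apply : ∀ (x : Ninf) (s : S), (Θ x).1 s = Θmap s (x.1 (s * t)) := fun x s => rfl
  -- injectivity
  have hinj : Function.Injective Θ := by
    rw [injective_iff_map_eq_one]
    intro x hx
    have hzero : ∀ s : S, x.1 (s * t) = 1 := by
      intro s
      obtain ⟨m, hm⟩ := QuotientGroup.mk_surjective (x.1 (s * t))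
      have h1 : (Θ x).1 s = 1 := by rw [hx]; rfl
      rw [Θ_apply, ← hm, Θmap_mk] at h1
      have h2 : ψ (t : G) m ∈ Subgroup.comap (ψ (s : G)).toMonoidHom M :=
        (QuotientGroup.eq_one_iff _).mp h1
      have h3 : m ∈ Subgroup.comap (ψ ((s * t : S) : G)).toMonoidHom M := by
        rw [hKmem, hpsimul]
        exact (hKmem s _).mp h2
      rw [← hm]
      exact (QuotientGroup.eq_one_iff _).mpr h3
    have hx2 := (hNinf x.1).mp x.2
    ext r
    obtain ⟨u0, v0, hu0⟩ := hrev r t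
    have h4 : x.1 (v0 * t) = QuotientGroup.mk (1 : N) := by
      rw [hzero v0]; rfl
    have h5 : x.1 r = QuotientGroup.mk (1 : N) := hx2 r (v0 * t) ⟨u0, hu0.symm⟩ 1 h4
    show x.1 r = (1 : Ninf).1 r
    rw [h5]; rfl
  -- surjectivity
  have hsurj : Function.Surjective Θ := by
    intro y
    choose u v huv using fun r : S => hrev r t
    choose nrep hnrep using fun r : S => QuotientGroup.mk_surjective (y.1 (v r))
    set xf : ∀ s : S, N ⧸ Subgroup.comap (ψ (s : G)).toMonoidHom M :=
      fun r => QuotientGroup.mk (ψ ((t : G)⁻¹) (nrep r)) with hxf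
    have hy := (hNinf y.1).mp y.2
    -- well-definedness lemma
    have W : ∀ (r u' v' : S) (n : N), u' * r = v' * t → y.1 v' = QuotientGroup.mk n →
        xf r = QuotientGroup.mk (ψ ((t : G)⁻¹) n) := by
      intro r u' v' n h1 h2
      obtain ⟨a, b, hab⟩ := hrev (u r) u'
      have hc : (a * v r) * t = (b * v') * t := by
        rw [mul_assoc, ← huv r, ← mul_assoc, hab, mul_assoc, h1, mul_assoc]
      have hcc : a * v r = b * v' := by
        apply Subtype.ext
        have := congrArg Subtype.val hc
        rw [hcoe, hcoe] at this
        exact mul_right_cancel this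
      obtain ⟨m, hm⟩ := QuotientGroup.mk_surjective (y.1 (a * v r))
      have hvm : y.1 (v r) = QuotientGroup.mk m := hy (v r) (a * v r) ⟨a, rfl⟩ m hm.symm
      have hv'm : y.1 v' = QuotientGroup.mk m := by
        apply hy v' (b * v') ⟨b, rfl⟩ m
        rw [← hcc]; exact hm.symm
      have hz1 : (nrep r)⁻¹ * m ∈ Subgroup.comap (ψ ((v r : S) : G)).toMonoidHom M := by
        apply QuotientGroup.eq.mp
        rw [hnrep r, hvm]
      have hz2 : n⁻¹ * m ∈ Subgroup.comap (ψ ((v' : S) : G)).toMonoidHom M := by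
        apply QuotientGroup.eq.mp
        rw [← h2, hv'm]
      have hw1 : ψ ((t : G)⁻¹) ((nrep r)⁻¹ * m) ∈ Subgroup.comap (ψ (r : G)).toMonoidHom M :=
        hKr r (u r) (v r) _ (huv r) ((hKmem (v r) _).mp hz1)
      have hw2 : ψ ((t : G)⁻¹) (n⁻¹ * m) ∈ Subgroup.comap (ψ (r : G)).toMonoidHom M :=
        hKr r u' v' _ h1 ((hKmem v' _).mp hz2)
      show QuotientGroup.mk (ψ ((t : G)⁻¹) (nrep r)) = QuotientGroup.mk (ψ ((t : G)⁻¹) n)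
      apply QuotientGroup.eq.mpr
      have key : (ψ ((t : G)⁻¹) (nrep r))⁻¹ * ψ ((t : G)⁻¹) n
          = (ψ ((t : G)⁻¹) ((nrep r)⁻¹ * m)) * (ψ ((t : G)⁻¹) (n⁻¹ * m))⁻¹ := by
        simp only [map_mul, map_inv]
        group
      rw [key]
      exact mul_mem hw1 (inv_mem hw2)
    have hmemx : xf ∈ Ninf := by
      rw [hNinf]
      rintro s t' ⟨w, rfl⟩ p hp
      have h6 : xf s = QuotientGroup.mk (ψ ((t : G)⁻¹) (nrep (w * s))) := by
        apply W s (u (w * s) * w) (v (w * s)) (nrep (w * s))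
        · rw [mul_assoc]; exact huv (w * s)
        · exact (hnrep (w * s)).symm
      have h7 : xf (w * s) = QuotientGroup.mk (ψ ((t : G)⁻¹) (nrep (w * s))) := rfl
      rw [h7] at hp
      have hd : (ψ ((t : G)⁻¹) (nrep (w * s)))⁻¹ * p
          ∈ Subgroup.comap (ψ ((w * s : S) : G)).toMonoidHom M := QuotientGroup.eq.mp hp
      rw [h6]
      exact QuotientGroup.eq.mpr (hB w s _ hd)
    refine ⟨⟨xf, hmemx⟩, ?_⟩
    apply Subtype.ext
    funext s
    obtain ⟨n, hn⟩ := QuotientGroup.mk_surjective (y.1 (t * s))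
    have h8 : xf (s * t) = QuotientGroup.mk (ψ ((t : G)⁻¹) n) := by
      apply W (s * t) t (t * s) n (mul_assoc t s t).symm hn.symm
    have h9 : y.1 s = QuotientGroup.mk n := hy s (t * s) ⟨t, rfl⟩ n hn.symm
    show Θmap s (xf (s * t)) = y.1 s
    rw [h8, Θmap_mk, hcancel, h9]
  refine ⟨MulEquiv.ofBijective Θ ⟨hinj, hsurj⟩, ?_, ?_⟩
  · intro x s n hxn
    show (Θ x).1 s = QuotientGroup.mk (ψ (t : G) n)
    rw [Θ_apply, hxn, Θmap_mk]
  · intro x n h s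
    show (Θ x).1 s = QuotientGroup.mk (ψ (t : G) n)
    rw [Θ_apply, h (s * t), Θmap_mk]
end

section
/- There is an isomorphism of topological groups from the additive group ∏_p ℤ_p (the product over all primes p of the p-adic integers, with the product topology) onto the Pontryagin dual of the discrete additive group ℚ/ℤ, where the Pontryagin dual of a discrete abelian group A is the group of all group homomorphisms from A to the circle group, with the topology of pointwise convergence (equivalently, the compact-open topology). -/
/-!
An element `x = (x_p)` of `∏ ℤ_p` acts on a rational `q` of denominator `n` through any integer
`m` with `m ≡ x_p mod p ^ v_p(n)` for all `p` (Chinese remainder theorem): `q ↦ exp(2πi m q)`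
does not depend on the choice of `m`, kills `ℤ`, and is additive in `x`. A character `ψ` of
`ℚ/ℤ` is determined by the roots of unity `ψ(1/n)`; writing `ψ(1/n) = exp(2πi c_n / n)`, the
integers `c_(p^k)` are `p`-adically compatible, so they define `x_p`, and `x` is sent to `ψ`.
Evaluating at `1/p^k` gives injectivity. The character at `q` only depends on `x` modulo
`q.den`, an open condition, so the map is continuous, hence a homeomorphism from the compact
space `∏ ℤ_p` onto the Hausdorff dual.
-/

open Real

noncomputable section

instance Nat.Primes.fact_prime (p : Nat.Primes) : Fact (p : ℕ).Prime := ⟨p.2⟩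

abbrev ZHat : Type := ∀ p : Nat.Primes, ℤ_[(p : ℕ)]

local notation "ℚ/ℤ" => ℚ ⧸ AddSubgroup.zmultiples (1 : ℚ)

theorem PadicInt.continuous_toZModPow {p : ℕ} [Fact p.Prime] (k : ℕ) :
    Continuous (toZModPow (p := p) k) := by
  refine continuous_of_continuousAt_zero (toZModPow k) ?_
  rw [ContinuousAt, map_zero, nhds_discrete (ZMod _), Filter.tendsto_pure]
  have hker : IsOpen (RingHom.ker (toZModPow (p := p) k) : Set ℤ_[p]) := by
    rw [ker_toZModPow, ← Ideal.span_singleton_pow, ← maximalIdeal_eq_span_p]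
    exact IsLocalRing.isOpen_maximalIdeal_pow _ _
  exact hker.mem_nhds (map_zero _)

theorem Int.natCast_dvd_of_forall_pow_factorization_dvd {n : ℕ} (hn : n ≠ 0) {a : ℤ}
    (h : ∀ p : Nat.Primes, ((p : ℕ) : ℤ) ^ n.factorization p ∣ a) : (n : ℤ) ∣ a := by
  rw [Int.natCast_dvd]
  refine (Nat.dvd_iff_prime_pow_dvd_dvd _ _).mpr fun p k hp hpk => ?_
  have hk := (hp.pow_dvd_iff_le_factorization hn).mp hpk
  refine (pow_dvd_pow p hk).trans (Int.natCast_dvd.mp ?_)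
  exact_mod_cast h ⟨p, hp⟩

def expQ : AddChar ℚ Circle where
  toFun q := Circle.exp (2 * π * q)
  map_zero_eq_one' := by simp
  map_add_eq_mul' q r := by rw [Rat.cast_add, mul_add, Circle.exp_add]

theorem expQ_apply (q : ℚ) : expQ q = Circle.exp (2 * π * q) := rfl

theorem expQ_eq_one_iff {q : ℚ} : expQ q = 1 ↔ ∃ k : ℤ, q = k := by
  rw [expQ_apply, Circle.exp_eq_one]
  refine exists_congr fun k => ?_
  rw [mul_comm (k : ℝ), mul_right_inj' (by positivity)]
  exact_mod_cast Iff.rfl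

theorem expQ_intCast (k : ℤ) : expQ k = 1 := expQ_eq_one_iff.mpr ⟨k, rfl⟩

theorem expQ_div_eq_expQ_div_iff {n : ℕ} (hn : n ≠ 0) (a b : ℤ) :
    expQ (a / n) = expQ (b / n) ↔ (n : ℤ) ∣ a - b := by
  have hn' : (n : ℚ) ≠ 0 := by exact_mod_cast hn
  rw [← div_eq_one, ← AddChar.map_sub_eq_div, ← sub_div, expQ_eq_one_iff]
  refine exists_congr fun k => ?_
  rw [div_eq_iff hn', mul_comm]
  exact_mod_cast Iff.rfl

theorem expQ_intCast_mul_eq_of_dvd {q : ℚ} {m m' : ℤ} (h : (q.den : ℤ) ∣ m - m') :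
    expQ (m * q) = expQ (m' * q) := by
  have key (k : ℤ) : (k : ℚ) * q = ((k * q.num : ℤ) : ℚ) / q.den := by
    push_cast
    rw [mul_div_assoc, Rat.num_div_den]
  rw [key, key, expQ_div_eq_expQ_div_iff q.den_nz, ← sub_mul]
  exact h.mul_right _

theorem exists_expQ_div_eq_of_pow_eq_one {z : Circle} {n : ℕ} (hn : n ≠ 0) (h : z ^ n = 1) :
    ∃ c : ℤ, z = expQ (c / n) := by
  have : NeZero n := ⟨hn⟩
  obtain ⟨j, hj⟩ := (bijective_rootsOfUnityAddChar n).2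
    ⟨toUnits z, by rw [mem_rootsOfUnity, ← map_pow, h, map_one]⟩
  have hz : ZMod.toCircle j = z := by
    rw [← ZMod.rootsOfUnityAddChar_val, hj]
    rfl
  refine ⟨j.val, ?_⟩
  rw [← hz, ZMod.toCircle_eq_circleExp, expQ_apply]
  push_cast
  rfl

def IsIntLift (x : ZHat) (n : ℕ) (m : ℤ) : Prop :=
  ∀ p : Nat.Primes, PadicInt.toZModPow (n.factorization p) (x p) = m

section IsIntLift

variable {x y : ZHat} {n : ℕ} {m m' : ℤ}

theorem isIntLift_iff : IsIntLift x n m ↔ ∀ p : Nat.Primes, p ∈ n.primeFactors.subtype Nat.Prime →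
    PadicInt.toZModPow (n.factorization p) (x p) = m := by
  refine ⟨fun h p _ => h p, fun h p => ?_⟩
  by_cases hp : p ∈ (n.primeFactors.subtype Nat.Prime : Finset Nat.Primes)
  · exact h p hp
  · have h0 : n.factorization p = 0 := by
      rw [← Finsupp.notMem_support_iff, Nat.support_factorization]
      exact fun hp' => hp (Finset.mem_subtype.mpr hp')
    have : Subsingleton (ZMod ((p : ℕ) ^ n.factorization p)) := by
      rw [h0, pow_zero]
      infer_instance
    exact Subsingleton.elim _ _

theorem exists_isIntLift (x : ZHat) (n : ℕ) : ∃ m : ℤ, IsIntLift x n m := by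
  obtain ⟨m, hm⟩ := Nat.chineseRemainderOfFinset
    (fun p : Nat.Primes => (PadicInt.toZModPow (n.factorization p) (x p)).val)
    (fun p => (p : ℕ) ^ n.factorization p) (n.primeFactors.subtype Nat.Prime : Finset Nat.Primes)
    (fun p _ => pow_ne_zero _ p.2.ne_zero)
    (fun p _ q _ hpq => Nat.Coprime.pow _ _ ((Nat.coprime_primes p.2 q.2).mpr
      (Subtype.coe_ne_coe.mpr hpq)))
  refine ⟨m, isIntLift_iff.mpr fun p hp => ?_⟩
  rw [Int.cast_natCast, (ZMod.natCast_eq_natCast_iff _ _ _).mpr (hm p hp), ZMod.natCast_zmod_val]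

theorem IsIntLift.add (hx : IsIntLift x n m) (hy : IsIntLift y n m') :
    IsIntLift (x + y) n (m + m') := fun p => by
  rw [Pi.add_apply, map_add, hx p, hy p, Int.cast_add]

theorem IsIntLift.of_dvd {d : ℕ} (h : IsIntLift x n m) (hd : d ∣ n) (hn : n ≠ 0) :
    IsIntLift x d m := fun p => by
  have hle : d.factorization p ≤ n.factorization p :=
    (Nat.factorization_le_iff_dvd (ne_zero_of_dvd_ne_zero hn hd) hn).mpr hd p
  rw [← PadicInt.cast_toZModPow _ _ hle, h p, ZMod.cast_intCast (pow_dvd_pow _ hle)]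

theorem IsIntLift.dvd_sub (hn : n ≠ 0) (hm : IsIntLift x n m) (hm' : IsIntLift x n m') :
    (n : ℤ) ∣ m - m' :=
  Int.natCast_dvd_of_forall_pow_factorization_dvd hn fun p => by
    have := (ZMod.intCast_eq_intCast_iff_dvd_sub m' m _).mp ((hm' p).symm.trans (hm p))
    exact_mod_cast this

theorem IsIntLift.toZModPow_eq {p : Nat.Primes} {k : ℕ} (h : IsIntLift x ((p : ℕ) ^ k) m) :
    PadicInt.toZModPow k (x p) = m := by
  have := h p
  rwa [Nat.factorization_pow_self p.2] at this

theorem isOpen_setOf_isIntLift (n : ℕ) (m : ℤ) : IsOpen {x : ZHat | IsIntLift x n m} := by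
  simp only [isIntLift_iff, Set.ofPred_forall]
  refine isOpen_biInter_finset fun p _ => ?_
  exact (isOpen_discrete {(m : ZMod ((p : ℕ) ^ n.factorization p))}).preimage
    ((PadicInt.continuous_toZModPow _).comp (continuous_apply p))

end IsIntLift

def intLift (x : ZHat) (n : ℕ) : ℤ := (exists_isIntLift x n).choose

theorem isIntLift_intLift (x : ZHat) (n : ℕ) : IsIntLift x n (intLift x n) :=
  (exists_isIntLift x n).choose_spec

theorem expQ_intLift_mul_eq {x : ZHat} {n : ℕ} {m : ℤ} {q : ℚ} (hn : n ≠ 0) (hq : q.den ∣ n)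
    (hm : IsIntLift x n m) : expQ (intLift x q.den * q) = expQ (m * q) :=
  expQ_intCast_mul_eq_of_dvd ((isIntLift_intLift x q.den).dvd_sub q.den_nz (hm.of_dvd hq hn))

def padicChar (x : ZHat) : AddChar ℚ Circle where
  toFun q := expQ (intLift x q.den * q)
  map_zero_eq_one' := by rw [mul_zero, AddChar.map_zero_eq_one]
  map_add_eq_mul' q r := by
    have hn : q.den * r.den ≠ 0 := mul_ne_zero q.den_nz r.den_nz
    obtain ⟨m, hm⟩ := exists_isIntLift x (q.den * r.den)
    rw [expQ_intLift_mul_eq hn (Rat.add_den_dvd q r) hm,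
      expQ_intLift_mul_eq hn (dvd_mul_right _ _) hm, expQ_intLift_mul_eq hn (dvd_mul_left _ _) hm,
      mul_add, AddChar.map_add_eq_mul]

section padicChar

variable {x : ZHat} {n : ℕ} {m : ℤ}

theorem padicChar_eq {q : ℚ} (hn : n ≠ 0) (hq : q.den ∣ n) (hm : IsIntLift x n m) :
    padicChar x q = expQ (m * q) :=
  expQ_intLift_mul_eq hn hq hm

theorem padicChar_inv_natCast (hn : n ≠ 0) (hm : IsIntLift x n m) :
    padicChar x (n : ℚ)⁻¹ = expQ (m / n) := by
  rw [padicChar_eq hn (by rw [Rat.inv_natCast_den, if_neg hn]) hm, div_eq_mul_inv]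

variable (x) in
theorem padicChar_one : padicChar x 1 = 1 := by
  rw [padicChar_eq one_ne_zero (by simp) (isIntLift_intLift x 1), mul_one, expQ_intCast]

theorem padicChar_add_left (x y : ZHat) (q : ℚ) :
    padicChar (x + y) q = padicChar x q * padicChar y q := by
  have hx := isIntLift_intLift x q.den
  have hy := isIntLift_intLift y q.den
  rw [padicChar_eq q.den_nz dvd_rfl (hx.add hy), padicChar_eq q.den_nz dvd_rfl hx,
    padicChar_eq q.den_nz dvd_rfl hy, Int.cast_add, add_mul, AddChar.map_add_eq_mul]

end padicChar

def dualChar (x : ZHat) : AddChar (ℚ/ℤ) Circle :=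
  AddChar.toAddMonoidHomEquiv.symm <| QuotientAddGroup.lift _ (padicChar x).toAddMonoidHom <| by
    rw [AddSubgroup.zmultiples_le, AddMonoidHom.mem_ker]
    exact congrArg Additive.ofMul (padicChar_one x)

theorem dualChar_coe (x : ZHat) (q : ℚ) : dualChar x q = padicChar x q := rfl

theorem dualChar_add_left (x y : ZHat) (a : ℚ/ℤ) :
    dualChar (x + y) a = dualChar x a * dualChar y a := by
  induction a using QuotientAddGroup.induction_on with
  | H q => exact padicChar_add_left x y q

namespace AddChar

variable (ψ : AddChar (ℚ/ℤ) Circle)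

theorem apply_coe_eq_zpow (q : ℚ) : ψ q = ψ ↑((q.den : ℚ)⁻¹) ^ q.num := by
  rw [← map_zsmul_eq_zpow, ← QuotientAddGroup.mk_zsmul, zsmul_eq_mul, ← div_eq_mul_inv,
    Rat.num_div_den]

theorem apply_inv_natCast_eq_pow_div {d n : ℕ} (hd : d ∣ n) (hn : n ≠ 0) :
    ψ ↑((d : ℚ)⁻¹) = ψ ↑((n : ℚ)⁻¹) ^ (n / d) := by
  have hd0 : (d : ℚ) ≠ 0 := by exact_mod_cast ne_zero_of_dvd_ne_zero hn hd
  rw [← map_nsmul_eq_pow, ← QuotientAddGroup.mk_nsmul, nsmul_eq_mul, Nat.cast_div hd hd0]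
  congr 2
  field_simp

theorem exists_apply_inv_natCast_eq_expQ (n : ℕ) : ∃ c : ℤ, ψ ↑((n : ℚ)⁻¹) = expQ (c / n) := by
  rcases eq_or_ne n 0 with rfl | hn
  · exact ⟨0, by simp⟩
  · refine exists_expQ_div_eq_of_pow_eq_one hn ?_
    have h1 : ((1 : ℚ) : ℚ/ℤ) = 0 :=
      (QuotientAddGroup.eq_zero_iff _).mpr (AddSubgroup.mem_zmultiples 1)
    have := ψ.apply_inv_natCast_eq_pow_div (one_dvd n) hn
    rwa [Nat.cast_one, inv_one, h1, map_zero_eq_one, Nat.div_one, eq_comm] at this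

theorem dvd_sub_of_apply_inv_natCast_eq_expQ {c : ℕ → ℤ}
    (hc : ∀ n : ℕ, ψ ↑((n : ℚ)⁻¹) = expQ (c n / n)) {d n : ℕ} (hd : d ∣ n) (hn : n ≠ 0) :
    (d : ℤ) ∣ c n - c d := by
  have hd0 : d ≠ 0 := ne_zero_of_dvd_ne_zero hn hd
  rw [← expQ_div_eq_expQ_div_iff hd0, ← hc d, ψ.apply_inv_natCast_eq_pow_div hd hn, hc n,
    ← map_nsmul_eq_pow, nsmul_eq_mul, Nat.cast_div hd (by exact_mod_cast hd0)]
  congr 1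
  field_simp

theorem ext_of_apply_inv_natCast {ψ ψ' : AddChar (ℚ/ℤ) Circle}
    (h : ∀ n : ℕ, n ≠ 0 → ψ ↑((n : ℚ)⁻¹) = ψ' ↑((n : ℚ)⁻¹)) : ψ = ψ' := by
  ext a
  induction a using QuotientAddGroup.induction_on with
  | H q => rw [ψ.apply_coe_eq_zpow, ψ'.apply_coe_eq_zpow, h _ q.den_nz]

end AddChar

theorem exists_dualChar_eq (ψ : AddChar (ℚ/ℤ) Circle) : ∃ x : ZHat, dualChar x = ψ := by
  choose c hc using ψ.exists_apply_inv_natCast_eq_expQ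
  have hc_dvd : ∀ {d n : ℕ}, d ∣ n → n ≠ 0 → (d : ℤ) ∣ c n - c d :=
    ψ.dvd_sub_of_apply_inv_natCast_eq_expQ hc
  have hseq (p : Nat.Primes) (i : ℕ) :
      ((p : ℕ) : ℤ) ^ i ∣ c ((p : ℕ) ^ (i + 1)) - c ((p : ℕ) ^ i) := by
    exact_mod_cast hc_dvd (pow_dvd_pow _ i.le_succ) (pow_ne_zero _ p.2.ne_zero)
  let x : ZHat := fun p => PadicInt.ofIntSeq _
    (PadicInt.isCauSeq_padicNorm_of_pow_dvd_sub (fun i => c ((p : ℕ) ^ i)) p (hseq p))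
  -- `c n ≡ c (p ^ v_p(n)) ≡ x_p` modulo `p ^ v_p(n)`
  have hx {n : ℕ} (hn : n ≠ 0) : IsIntLift x n (c n) := fun p => by
    rw [PadicInt.toZModPow_ofIntSeq_of_pow_dvd_sub _ _ (hseq p),
      ZMod.intCast_eq_intCast_iff_dvd_sub]
    exact_mod_cast hc_dvd (Nat.ordProj_dvd n p) hn
  refine ⟨x, AddChar.ext_of_apply_inv_natCast fun n hn => ?_⟩
  rw [dualChar_coe, padicChar_inv_natCast hn (hx hn), hc n]

theorem dualChar_injective : Function.Injective dualChar := by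
  intro x y h
  funext p
  refine PadicInt.ext_of_toZModPow.mp fun k => ?_
  have hpk : (p : ℕ) ^ k ≠ 0 := pow_ne_zero _ p.2.ne_zero
  obtain ⟨m, hm⟩ := exists_isIntLift x ((p : ℕ) ^ k)
  obtain ⟨m', hm'⟩ := exists_isIntLift y ((p : ℕ) ^ k)
  have hchar := DFunLike.congr_fun h ↑((((p : ℕ) ^ k : ℕ) : ℚ)⁻¹)
  rw [dualChar_coe, dualChar_coe, padicChar_inv_natCast hpk hm, padicChar_inv_natCast hpk hm',
    expQ_div_eq_expQ_div_iff hpk] at hchar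
  rw [hm.toZModPow_eq, hm'.toZModPow_eq, ZMod.intCast_eq_intCast_iff_dvd_sub]
  exact_mod_cast dvd_sub_comm.mp hchar

theorem continuous_dualChar_apply (a : ℚ/ℤ) : Continuous fun x : ZHat => dualChar x a := by
  induction a using QuotientAddGroup.induction_on with
  | H q =>
    refine ((IsLocallyConstant.iff_eventually_eq _).mpr fun x₀ => ?_).continuous
    obtain ⟨m, hm⟩ := exists_isIntLift x₀ q.den
    filter_upwards [(isOpen_setOf_isIntLift q.den m).mem_nhds hm] with x hx
    rw [dualChar_coe, dualChar_coe, padicChar_eq q.den_nz dvd_rfl hx,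
      padicChar_eq q.den_nz dvd_rfl hm]

def toCharacter (x : ZHat) : {f : ℚ/ℤ → Circle // ∀ a b, f (a + b) = f a * f b} :=
  ⟨dualChar x, (dualChar x).map_add_eq_mul⟩

theorem toCharacter_bijective : Function.Bijective toCharacter := by
  refine ⟨fun x y h => dualChar_injective (DFunLike.coe_injective (congrArg Subtype.val h)), ?_⟩
  rintro ⟨f, hf⟩
  obtain ⟨x, hx⟩ := exists_dualChar_eq ⟨f, by simpa using hf 0 0, hf⟩
  exact ⟨x, Subtype.ext (congrArg DFunLike.coe hx)⟩

theorem continuous_toCharacter : Continuous toCharacter :=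
  (continuous_pi continuous_dualChar_apply).subtype_mk _

end

/-- The additive group `∏_p ℤ_p` (with the product topology) is
isomorphic, as a topological group, to the Pontryagin dual of the discrete group `ℚ/ℤ`,
i.e. to the group of all homomorphisms from `ℚ/ℤ` to the circle group with the topology
of pointwise convergence. -/
theorem prod_padicInt_iso_dual_of_QmodZ :
    haveI : ∀ p : Nat.Primes, Fact (p.1.Prime) := fun p => ⟨p.2⟩
    ∃ e : (∀ p : Nat.Primes, ℤ_[(p : ℕ)]) ≃ₜ
        {f : (ℚ ⧸ AddSubgroup.zmultiples (1 : ℚ)) → Circle // ∀ a b, f (a + b) = f a * f b},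
      ∀ x y : ∀ p : Nat.Primes, ℤ_[(p : ℕ)],
        (e (x + y)).1 = fun a => (e x).1 a * (e y).1 a :=
  ⟨continuous_toCharacter.homeoOfEquivCompactToT2 (f := Equiv.ofBijective _ toCharacter_bijective),
    fun x y => funext (dualChar_add_left x y)⟩
end
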